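/- For all integers n ≥ 3 and m ≥ 2 and every tree T_n on n vertices, R(T_n, 2K_m) = (n−1)(m−1) + 2. -/

import Mathlib

open SimpleGraph Finset

/-- `G` embeds into `H` (a copy of `G` appears in `H`). -/
def graphEmbeds {V W : Type*} (G : SimpleGraph V) (H : SimpleGraph W) : Prop :=
  ∃ f : V → W, Function.Injective f ∧ ∀ u v, G.Adj u v → H.Adj (f u) (f v)

/-- `N` is large enough for the Ramsey property: every red/blue coloring of `K_N`
(the red graph `R`, blue graph `Rᶜ`) contains a red `G` or a blue `H`. -/
def isRamsey {V W : Type*} (G : SimpleGraph V) (H : SimpleGraph W) (N : ℕ) : Prop :=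
  ∀ R : SimpleGraph (Fin N), graphEmbeds G R ∨ graphEmbeds H Rᶜ

/-- The Ramsey number `R(G,H)`. -/
noncomputable def ramsey {V W : Type*} (G : SimpleGraph V) (H : SimpleGraph W) : ℕ :=
  sInf {N | isRamsey G H N}

/-- `t` disjoint copies of the complete graph `K_m`. -/
def kCliques (t m : ℕ) : SimpleGraph (Fin t × Fin m) where
  Adj x y := x.1 = y.1 ∧ x.2 ≠ y.2
  symm := ⟨fun x y h => ⟨h.1.symm, h.2.symm⟩⟩
  loopless := ⟨fun x h => h.2 rfl⟩

/-- The chromatic number as a natural number. -/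
noncomputable def chromNum {V : Type*} (G : SimpleGraph V) : ℕ := sInf {n | G.Colorable n}

/-- The chromatic surplus: the minimum size of a color class over all proper
colorings with `chromNum G` colors. -/
noncomputable def surplus {V : Type*} [Fintype V] (G : SimpleGraph V) : ℕ :=
  sInf {k | ∃ C : G.Coloring (Fin (chromNum G)), ∃ i : Fin (chromNum G),
    (Finset.univ.filter (fun v => C v = i)).card = k}

/-- `a` is a leaf of `G`: it has a unique neighbor. -/
def IsLeaf {V : Type*} (G : SimpleGraph V) (a : V) : Prop := ∃! w, G.Adj a w

/-- Stretching: delete a leaf `b` and attach a new vertex (reusing the label `b`)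
to the leaf `a`. -/
def isStretch {V : Type*} (T T' : SimpleGraph V) : Prop :=
  ∃ a b : V, a ≠ b ∧ IsLeaf T a ∧ IsLeaf T b ∧
    ∀ x y, T'.Adj x y ↔
      ((T.Adj x y ∧ x ≠ b ∧ y ≠ b) ∨ (x = b ∧ y = a) ∨ (x = a ∧ y = b))

/-- Expanding at a vertex `u` of degree `d` (`2 ≤ d ≤ n-2`) all of whose neighbors
are leaves except `z0`: delete a leaf `b` outside `N[u]` and attach a new vertex
(reusing the label `b`) to `u`. -/
def isExpand {V : Type*} [Fintype V] (T T' : SimpleGraph V) : Prop :=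
  ∃ u b z0 : V, T.Adj u z0 ∧ ¬ IsLeaf T z0 ∧
    (∀ z, T.Adj u z → z ≠ z0 → IsLeaf T z) ∧
    2 ≤ (T.neighborSet u).ncard ∧ (T.neighborSet u).ncard ≤ Fintype.card V - 2 ∧
    IsLeaf T b ∧ b ≠ u ∧ ¬ T.Adj u b ∧
    ∀ x y, T'.Adj x y ↔
      ((T.Adj x y ∧ x ≠ b ∧ y ≠ b) ∨ (x = b ∧ y = u) ∨ (x = u ∧ y = b))

/-- Disjoint union of `K_m` and `K_l`. -/
def kUnion (m l : ℕ) : SimpleGraph (Fin m ⊕ Fin l) where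
  Adj x y := x ≠ y ∧ ((x.isLeft ∧ y.isLeft) ∨ (x.isRight ∧ y.isRight))
  symm := ⟨fun x y h => ⟨h.1.symm, h.2.imp (fun p => ⟨p.2, p.1⟩) (fun p => ⟨p.2, p.1⟩)⟩⟩
  loopless := ⟨fun x h => h.1 rfl⟩

/-- Disjoint union of `k` graphs, each on `Fin n`. -/
def disjUnion {k n : ℕ} (Fs : Fin k → SimpleGraph (Fin n)) :
    SimpleGraph (Fin k × Fin n) where
  Adj x y := x.1 = y.1 ∧ (Fs x.1).Adj x.2 y.2
  symm := ⟨by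
    rintro ⟨i, a⟩ ⟨j, b⟩ ⟨h1, h2⟩
    dsimp at h1 h2 ⊢
    subst h1
    exact ⟨rfl, h2.symm⟩⟩
  loopless := ⟨by
    rintro ⟨i, a⟩ ⟨h1, h2⟩
    exact (Fs i).irrefl h2⟩

/-- Disjoint union of graphs `Fs i` on `Fin (n i)`. -/
def sigmaUnion {r : ℕ} {n : Fin r → ℕ} (Fs : ∀ i, SimpleGraph (Fin (n i))) :
    SimpleGraph (Σ i, Fin (n i)) where
  Adj x y := ∃ (i : Fin r) (a b : Fin (n i)), x = ⟨i, a⟩ ∧ y = ⟨i, b⟩ ∧ (Fs i).Adj a b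
  symm := ⟨by
    rintro x y ⟨i, a, b, hx, hy, h⟩
    exact ⟨i, b, a, hy, hx, h.symm⟩⟩
  loopless := ⟨by
    rintro x ⟨i, a, b, hx, hy, h⟩
    rw [hx] at hy
    obtain ⟨-, hab⟩ := (Sigma.mk.inj_iff).mp hy
    exact (Fs i).irrefl (v := a) (by cases eq_of_heq hab; exact h)⟩


section AuxRamseyProof

attribute [local instance] Classical.propDecidable

variable {n N : ℕ}


/-- A finset is independent in `R` (i.e. a clique in the complement). -/
def indepR (R : SimpleGraph (Fin N)) (A : Finset (Fin N)) : Prop :=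
  ∀ x ∈ A, ∀ y ∈ A, ¬ R.Adj x y

/-- `T` embeds into `R` within the vertex set `U`. -/
def embIn (T : SimpleGraph (Fin n)) (R : SimpleGraph (Fin N)) (U : Finset (Fin N)) : Prop :=
  ∃ f : Fin n → Fin N, Function.Injective f ∧ (∀ a, f a ∈ U) ∧
    ∀ a b, T.Adj a b → R.Adj (f a) (f b)

lemma indepR_mono {R : SimpleGraph (Fin N)} {A B : Finset (Fin N)}
    (h : indepR R B) (hAB : A ⊆ B) : indepR R A :=
  fun x hx y hy => h x (hAB hx) y (hAB hy)

lemma embIn_mono {T : SimpleGraph (Fin n)} {R : SimpleGraph (Fin N)} {U U' : Finset (Fin N)}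
    (h : embIn T R U') (hU : U' ⊆ U) : embIn T R U := by
  obtain ⟨f, h1, h2, h3⟩ := h
  exact ⟨f, h1, fun a => hU (h2 a), h3⟩

section TreeFacts

variable {T : SimpleGraph (Fin n)}

lemma exists_adj_of_connected (hT : T.Connected) (hn : 2 ≤ n) (v : Fin n) :
    ∃ w, T.Adj v w := by
  have : Nontrivial (Fin n) := Fin.nontrivial_iff_two_le.mpr hn
  obtain ⟨u, hu⟩ := exists_ne v
  obtain ⟨w⟩ := hT.preconnected v u
  cases w with
  | nil => exact absurd rfl (Ne.symm hu)
  | cons h _ => exact ⟨_, h⟩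

lemma degree_ge_one (hT : T.Connected) (hn : 2 ≤ n) (v : Fin n) :
    1 ≤ T.degree v := by
  obtain ⟨w, hw⟩ := exists_adj_of_connected hT hn v
  exact (T.degree_pos_iff_exists_adj v).mpr ⟨w, hw⟩

lemma tree_sum_degrees (hT : T.IsTree) :
    ∑ v, T.degree v = 2 * (n - 1) := by
  rw [SimpleGraph.sum_degrees_eq_twice_card_edges]
  have h := hT.card_edgeFinset
  simp only [Fintype.card_fin] at h
  omega

/-- Every tree on at least 3 vertices has a leaf: a vertex whose neighbourhood is
a single vertex. -/
lemma exists_leaf (hT : T.IsTree) (hn : 3 ≤ n) :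
    ∃ ℓ p : Fin n, T.Adj ℓ p ∧ ∀ x, T.Adj ℓ x → x = p := by
  by_contra hcon
  push_neg at hcon
  have hdeg : ∀ v : Fin n, 2 ≤ T.degree v := by
    intro v
    obtain ⟨w, hw⟩ := exists_adj_of_connected hT.isConnected (by omega) v
    obtain ⟨x, hx, hxw⟩ := hcon v w hw
    have hsub : {w, x} ⊆ T.neighborFinset v := by
      intro y hy
      simp only [Finset.mem_insert, Finset.mem_singleton] at hy
      rcases hy with rfl | rfl <;> simp [SimpleGraph.mem_neighborFinset, hw, hx]
    have h2 : ({w, x} : Finset (Fin n)).card = 2 := by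
      rw [Finset.card_insert_of_notMem (by simp [Ne.symm hxw]), Finset.card_singleton]
    calc 2 = ({w, x} : Finset (Fin n)).card := h2.symm
      _ ≤ (T.neighborFinset v).card := Finset.card_le_card hsub
      _ = T.degree v := rfl
  have hsum : 2 * n ≤ ∑ v, T.degree v := by
    calc 2 * n = ∑ _v : Fin n, 2 := by simp [mul_comm]
      _ ≤ ∑ v, T.degree v := Finset.sum_le_sum (fun v _ => hdeg v)
  rw [tree_sum_degrees hT] at hsum
  omega

lemma star_adj_all {c : Fin n} (hdeg : n - 1 ≤ T.degree c) :
    ∀ x, x ≠ c → T.Adj c x := by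
  intro x hx
  have hsub : T.neighborFinset c ⊆ Finset.univ.erase c := by
    intro y hy
    simp only [Finset.mem_erase, Finset.mem_univ, and_true]
    rintro rfl
    exact T.irrefl ((SimpleGraph.mem_neighborFinset _ _ _).mp hy)
  have hcard : (Finset.univ.erase c).card ≤ (T.neighborFinset c).card := by
    have : (Finset.univ.erase c).card = n - 1 := by
      rw [Finset.card_erase_of_mem (Finset.mem_univ c)]; simp
    rw [this]; exact hdeg
  have := Finset.eq_of_subset_of_card_le hsub hcard
  have hxmem : x ∈ T.neighborFinset c := by
    rw [this]; simp [hx]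
  simpa [SimpleGraph.mem_neighborFinset] using hxmem

lemma star_edge (hT : T.IsTree) (hn : 3 ≤ n) {c : Fin n}
    (hc : ∀ x, x ≠ c → T.Adj c x) :
    ∀ a b, T.Adj a b → a = c ∨ b = c := by
  intro a b hab
  by_contra hcon
  push_neg at hcon
  obtain ⟨ha, hb⟩ := hcon
  -- degree of c is n-1
  have hdegc : T.degree c = n - 1 := by
    have hsub1 : Finset.univ.erase c ⊆ T.neighborFinset c := by
      intro y hy
      simp only [Finset.mem_erase, Finset.mem_univ, and_true] at hy
      simp [SimpleGraph.mem_neighborFinset, hc y hy]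
    have hsub2 : T.neighborFinset c ⊆ Finset.univ.erase c := by
      intro y hy
      simp only [Finset.mem_erase, Finset.mem_univ, and_true]
      rintro rfl
      exact T.irrefl ((SimpleGraph.mem_neighborFinset _ _ _).mp hy)
    have : T.neighborFinset c = Finset.univ.erase c :=
      Finset.Subset.antisymm hsub2 hsub1
    rw [SimpleGraph.degree, this, Finset.card_erase_of_mem (Finset.mem_univ c)]
    simp
  have hdega : 2 ≤ T.degree a := by
    have hsub : {c, b} ⊆ T.neighborFinset a := by
      intro y hy
      simp only [Finset.mem_insert, Finset.mem_singleton] at hy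
      rcases hy with rfl | rfl
      · simp [SimpleGraph.mem_neighborFinset, (hc a ha).symm]
      · simp [SimpleGraph.mem_neighborFinset, hab]
    have h2 : ({c, b} : Finset (Fin n)).card = 2 := by
      rw [Finset.card_insert_of_notMem (by simp [Ne.symm hb]), Finset.card_singleton]
    calc 2 = ({c, b} : Finset (Fin n)).card := h2.symm
      _ ≤ (T.neighborFinset a).card := Finset.card_le_card hsub
      _ = T.degree a := rfl
  -- sum over the rest
  have hsum := tree_sum_degrees hT
  have hsplit : ∑ v, T.degree v = T.degree c + ∑ v ∈ Finset.univ.erase c, T.degree v := by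
    rw [← Finset.add_sum_erase _ _ (Finset.mem_univ c)]
  have hrest : n - 1 ≤ ∑ v ∈ Finset.univ.erase c, T.degree v - 1 + 1 := by omega
  have hlow : ∀ v ∈ Finset.univ.erase c, 1 ≤ T.degree v := by
    intro v _
    exact degree_ge_one hT.isConnected (by omega) v
  have hbig : (Finset.univ.erase c).card + 1 ≤ ∑ v ∈ Finset.univ.erase c, T.degree v := by
    have hmem : a ∈ Finset.univ.erase c := by simp [ha]
    calc (Finset.univ.erase c).card + 1
        = ∑ _v ∈ Finset.univ.erase c, 1 + 1 := by simp
      _ = (∑ v ∈ (Finset.univ.erase c).erase a, 1) + 1 + 1 := by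
            rw [← Finset.add_sum_erase _ _ hmem]; ring
      _ ≤ (∑ v ∈ (Finset.univ.erase c).erase a, T.degree v) + T.degree a := by
            have h1 : (∑ _v ∈ (Finset.univ.erase c).erase a, 1) ≤
                ∑ v ∈ (Finset.univ.erase c).erase a, T.degree v :=
              Finset.sum_le_sum (fun v hv => hlow v (Finset.mem_of_mem_erase hv))
            omega
      _ = ∑ v ∈ Finset.univ.erase c, T.degree v := by
            rw [← Finset.add_sum_erase _ _ hmem]; ring
  have hcarde : (Finset.univ.erase c).card = n - 1 := by
    rw [Finset.card_erase_of_mem (Finset.mem_univ c)]; simp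
  omega

end TreeFacts


variable {T : SimpleGraph (Fin n)} {R : SimpleGraph (Fin N)}

/-- Crossing edge lemma: from a set `D` we can reach outside (avoiding `ℓ`). -/
lemma cross_edge (hT : T.IsTree) {D : Finset (Fin n)} {ℓ : Fin n}
    (hD : D.Nonempty) (hne : ∃ v, v ∉ D ∧ v ≠ ℓ)
    (hlD : ∀ y, T.Adj y ℓ → y ∈ D) :
    ∃ a ∈ D, ∃ b, b ∉ D ∧ b ≠ ℓ ∧ T.Adj a b := by
  obtain ⟨v, hvD, hvl⟩ := hne
  obtain ⟨u, hu⟩ := hD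
  obtain ⟨w⟩ := hT.isConnected.preconnected u v
  have H : ∀ (L : ℕ) (u : Fin n), u ∈ D → ∀ (w : T.Walk u v), w.length ≤ L →
      ∃ a ∈ D, ∃ b, b ∉ D ∧ b ≠ ℓ ∧ T.Adj a b := by
    intro L
    induction L with
    | zero =>
      intro u hu w hw
      cases w with
      | nil => exact absurd hu hvD
      | cons h p => simp [SimpleGraph.Walk.length_cons] at hw
    | succ L ih =>
      intro u hu w hw
      cases w with
      | nil => exact absurd hu hvD
      | @cons _ x _ h p =>
        by_cases hxD : x ∈ D
        · exact ih x hxD p (by simp [SimpleGraph.Walk.length_cons] at hw; omega)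
        · by_cases hxl : x = ℓ
          · subst hxl
            cases p with
            | nil => exact absurd rfl hvl
            | @cons _ y _ h2 p2 =>
              have hyD : y ∈ D := hlD y h2.symm
              refine ih y hyD p2 ?_
              simp [SimpleGraph.Walk.length_cons] at hw ⊢
              omega
          · exact ⟨u, hu, x, hxD, hxl, h⟩
  exact H w.length u hu w le_rfl

/-- In a tree, a vertex outside a connected set has at most one neighbour inside it. -/
lemma unique_parent (hT : T.IsTree) {D : Finset (Fin n)}
    (hconn : ∀ x ∈ D, ∀ y ∈ D, ∃ w : T.Walk x y, ∀ z ∈ w.support, z ∈ D)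
    {b a₁ a₂ : Fin n} (hb : b ∉ D) (h1 : a₁ ∈ D) (h2 : a₂ ∈ D)
    (e1 : T.Adj a₁ b) (e2 : T.Adj a₂ b) : a₁ = a₂ := by
  by_contra hne
  obtain ⟨w, hw⟩ := hconn a₁ h1 a₂ h2
  have hsup : ∀ z ∈ w.toPath.1.support, z ∈ D :=
    fun z hz => hw z (SimpleGraph.Walk.support_toPath_subset w hz)
  have hbP : b ∉ w.toPath.1.support := fun h => hb (hsup b h)
  have path1 : (SimpleGraph.Walk.cons e1.symm w.toPath.1).IsPath :=
    w.toPath.2.cons hbP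
  have path2 : (SimpleGraph.Walk.cons e2.symm (SimpleGraph.Walk.nil)).IsPath := by
    refine SimpleGraph.Walk.IsPath.nil.cons ?_
    simp only [SimpleGraph.Walk.support_nil, List.mem_singleton]
    rintro rfl
    exact hb h2
  have heq := hT.IsAcyclic.path_unique ⟨_, path1⟩ ⟨_, path2⟩
  have hval : (SimpleGraph.Walk.cons e1.symm w.toPath.1) =
      (SimpleGraph.Walk.cons e2.symm (SimpleGraph.Walk.nil)) := congrArg Subtype.val heq
  have hmem : a₁ ∈ (SimpleGraph.Walk.cons e1.symm w.toPath.1).support := by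
    simp [SimpleGraph.Walk.support_cons]
  rw [hval] at hmem
  simp [SimpleGraph.Walk.support_cons] at hmem
  rcases hmem with rfl | rfl
  · exact hb h1
  · exact hne rfl


/-- Greedy embedding of the tree minus the leaf `ℓ` into a set `S` of min red degree
`≥ n-2`, extending a seed embedding. -/
lemma greedy (hT : T.IsTree) (hn : 3 ≤ n) (S : Finset (Fin N))
    (hdeg : ∀ v ∈ S, n - 2 ≤ (S.filter (fun w => R.Adj v w)).card) (ℓ : Fin n) :
    ∀ (k : ℕ) (D : Finset (Fin n)) (f : Fin n → Fin N),
      ((univ : Finset (Fin n)) \ insert ℓ D).card = k →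
      ℓ ∉ D → D.Nonempty →
      (∀ y, T.Adj y ℓ → y ∈ D) →
      (∀ x ∈ D, ∀ y ∈ D, ∃ w : T.Walk x y, ∀ z ∈ w.support, z ∈ D) →
      (∀ a ∈ D, ∀ b ∈ D, f a = f b → a = b) →
      (∀ a ∈ D, f a ∈ S) →
      (∀ a b, T.Adj a b → a ∈ D → b ∈ D → R.Adj (f a) (f b)) →
      ∃ g : Fin n → Fin N,
        (∀ a ∈ D, g a = f a) ∧
        (∀ a b, a ≠ ℓ → b ≠ ℓ → g a = g b → a = b) ∧
        (∀ a, a ≠ ℓ → g a ∈ S) ∧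
        (∀ a b, T.Adj a b → a ≠ ℓ → b ≠ ℓ → R.Adj (g a) (g b)) := by
  intro k
  induction k with
  | zero =>
    intro D f hcard hlD hDne hyl hconn hinj hmap hpres
    have hall : ∀ a : Fin n, a ≠ ℓ → a ∈ D := by
      intro a ha
      by_contra haD
      have hmem : a ∈ (univ : Finset (Fin n)) \ insert ℓ D := by
        simp [Finset.mem_sdiff, Finset.mem_insert, ha, haD]
      rw [Finset.card_eq_zero] at hcard
      rw [hcard] at hmem
      exact absurd hmem (Finset.notMem_empty a)
    exact ⟨f, fun a _ => rfl,
      fun a b ha hb h => hinj a (hall a ha) b (hall b hb) h,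
      fun a ha => hmap a (hall a ha),
      fun a b hab ha hb => hpres a b hab (hall a ha) (hall b hb)⟩
  | succ k ih =>
    intro D f hcard hlD hDne hyl hconn hinj hmap hpres
    have hex : ∃ v, v ∉ D ∧ v ≠ ℓ := by
      have hpos : 0 < ((univ : Finset (Fin n)) \ insert ℓ D).card := by omega
      obtain ⟨v, hv⟩ := Finset.card_pos.mp hpos
      simp only [Finset.mem_sdiff, Finset.mem_insert, not_or] at hv
      exact ⟨v, hv.2.2, hv.2.1⟩
    obtain ⟨a, haD, b, hbD, hbl, hab⟩ := cross_edge hT hDne hex hyl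
    have hfa : f a ∈ S := hmap a haD
    have h1 : n - 2 ≤ (S.filter (fun w => R.Adj (f a) w)).card := hdeg _ hfa
    have hDcard : D.card ≤ n - 2 := by
      have hsub : D ⊆ (univ : Finset (Fin n)) \ {ℓ, b} := by
        intro x hx
        simp only [Finset.mem_sdiff, Finset.mem_univ, true_and, Finset.mem_insert,
          Finset.mem_singleton, not_or]
        exact ⟨fun h => hlD (by rwa [h] at hx), fun h => hbD (by rwa [h] at hx)⟩
      have hc2 : ((univ : Finset (Fin n)) \ {ℓ, b}).card = n - 2 := by
        rw [Finset.card_sdiff_of_subset (by simp)]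
        have : ({ℓ, b} : Finset (Fin n)).card = 2 := by
          rw [Finset.card_insert_of_notMem (by simp [Ne.symm hbl]), Finset.card_singleton]
        simp [this]
      calc D.card ≤ _ := Finset.card_le_card hsub
        _ = n - 2 := hc2
    have himg : (D.image f).card = D.card :=
      Finset.card_image_of_injOn (fun x hx y hy h => hinj x hx y hy h)
    have hy : ∃ y ∈ S.filter (fun w => R.Adj (f a) w), y ∉ D.image f := by
      by_contra hcon
      push_neg at hcon
      have hsub : S.filter (fun w => R.Adj (f a) w) ⊆ (D.image f).erase (f a) := by
        intro y hyf
        refine Finset.mem_erase.mpr ⟨?_, hcon y hyf⟩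
        rintro rfl
        exact R.irrefl (Finset.mem_filter.mp hyf).2
      have hle := Finset.card_le_card hsub
      rw [Finset.card_erase_of_mem (Finset.mem_image_of_mem f haD), himg] at hle
      omega
    obtain ⟨y, hyf, hyimg⟩ := hy
    have hySadj := Finset.mem_filter.mp hyf
    set f' := Function.update f b y with hf'
    have hfD : ∀ x ∈ D, f' x = f x := by
      intro x hx
      exact Function.update_of_ne (fun h => hbD (by rwa [h] at hx)) _ _
    have hf'b : f' b = y := Function.update_self _ _ _
    -- invariants for insert b D
    have hcard' : ((univ : Finset (Fin n)) \ insert ℓ (insert b D)).card = k := by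
      have hswap : insert ℓ (insert b D) = insert b (insert ℓ D) := by
        ext x
        simp only [Finset.mem_insert]
        tauto
      rw [hswap]
      have hbmem : b ∈ (univ : Finset (Fin n)) \ insert ℓ D := by
        simp [Finset.mem_sdiff, Finset.mem_insert, hbl, hbD]
      have : (univ : Finset (Fin n)) \ insert b (insert ℓ D) =
          ((univ : Finset (Fin n)) \ insert ℓ D).erase b := by
        ext x
        simp only [Finset.mem_sdiff, Finset.mem_insert, Finset.mem_erase, Finset.mem_univ,
          true_and, not_or]
        all_goals tauto
      rw [this, Finset.card_erase_of_mem hbmem, hcard]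
      omega
    have hconn' : ∀ x ∈ insert b D, ∀ y' ∈ insert b D,
        ∃ w : T.Walk x y', ∀ z ∈ w.support, z ∈ insert b D := by
      intro x hx y' hy'
      rcases Finset.mem_insert.mp hx with hxb | hxD <;>
        rcases Finset.mem_insert.mp hy' with hyb | hyD
      · subst hxb; subst hyb; exact ⟨SimpleGraph.Walk.nil, by simp⟩
      · subst hxb
        obtain ⟨w, hw⟩ := hconn a haD y' hyD
        refine ⟨SimpleGraph.Walk.cons hab.symm w, ?_⟩
        intro z hz
        rw [SimpleGraph.Walk.support_cons] at hz
        rcases List.mem_cons.mp hz with rfl | hz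
        · exact Finset.mem_insert_self _ _
        · exact Finset.mem_insert_of_mem (hw z hz)
      · subst hyb
        obtain ⟨w, hw⟩ := hconn x hxD a haD
        refine ⟨w.append (SimpleGraph.Walk.cons hab SimpleGraph.Walk.nil), ?_⟩
        intro z hz
        rw [SimpleGraph.Walk.support_append] at hz
        rcases List.mem_append.mp hz with hz | hz
        · exact Finset.mem_insert_of_mem (hw z hz)
        · simp only [SimpleGraph.Walk.support_cons, SimpleGraph.Walk.support_nil,
            List.tail_cons, List.mem_singleton] at hz
          subst hz
          exact Finset.mem_insert_self _ _
      · obtain ⟨w, hw⟩ := hconn x hxD y' hyD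
        exact ⟨w, fun z hz => Finset.mem_insert_of_mem (hw z hz)⟩
    have hinj' : ∀ x ∈ insert b D, ∀ y' ∈ insert b D, f' x = f' y' → x = y' := by
      intro x hx y' hy' h
      rcases Finset.mem_insert.mp hx with hxb | hxD <;>
        rcases Finset.mem_insert.mp hy' with hyb | hyD
      · rw [hxb, hyb]
      · exfalso
        rw [hxb, hf'b, hfD _ hyD] at h
        exact hyimg (h ▸ Finset.mem_image_of_mem f hyD)
      · exfalso
        rw [hyb, hf'b, hfD _ hxD] at h
        exact hyimg (h.symm ▸ Finset.mem_image_of_mem f hxD)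
      · rw [hfD _ hxD, hfD _ hyD] at h
        exact hinj x hxD y' hyD h
    have hmap' : ∀ x ∈ insert b D, f' x ∈ S := by
      intro x hx
      rcases Finset.mem_insert.mp hx with hxb | hxD
      · rw [hxb, hf'b]; exact hySadj.1
      · rw [hfD _ hxD]; exact hmap x hxD
    have hpres' : ∀ x y', T.Adj x y' → x ∈ insert b D → y' ∈ insert b D →
        R.Adj (f' x) (f' y') := by
      intro x y' hxy hx hy'
      rcases Finset.mem_insert.mp hx with hxb | hxD <;>
        rcases Finset.mem_insert.mp hy' with hyb | hyD
      · exfalso; rw [hxb, hyb] at hxy; exact T.irrefl hxy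
      · -- x = b adjacent to y' ∈ D : y' = a
        rw [hxb] at hxy
        have hya : y' = a := unique_parent hT hconn hbD hyD haD hxy.symm hab
        rw [hxb, hf'b, hfD _ hyD, hya]
        exact hySadj.2.symm
      · rw [hyb] at hxy
        have hxa : x = a := unique_parent hT hconn hbD hxD haD hxy hab
        rw [hyb, hf'b, hfD _ hxD, hxa]
        exact hySadj.2
      · rw [hfD _ hxD, hfD _ hyD]
        exact hpres x y' hxy hxD hyD
    obtain ⟨g, hg1, hg2, hg3, hg4⟩ := ih (insert b D) f' hcard'
      (by simp only [Finset.mem_insert, not_or]; exact ⟨Ne.symm hbl, hlD⟩)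
      ⟨b, Finset.mem_insert_self _ _⟩
      (fun y' hy' => Finset.mem_insert_of_mem (hyl y' hy'))
      hconn' hinj' hmap' hpres'
    exact ⟨g, fun x hx => (hg1 x (Finset.mem_insert_of_mem hx)).trans (hfD x hx),
      hg2, hg3, hg4⟩


/-- Run the greedy embedding and, if the tree cannot be embedded in `U`, conclude that
all red neighbours (in `U`) of the image of `p` lie in the image. -/
lemma extend_contra (hT : T.IsTree) (hn : 3 ≤ n) (U S : Finset (Fin N)) (hSU : S ⊆ U)
    (hdeg : ∀ v ∈ S, n - 2 ≤ (S.filter (fun w => R.Adj v w)).card)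
    (ℓ p : Fin n) (hlp : T.Adj ℓ p) (hluniq : ∀ x, T.Adj ℓ x → x = p)
    (hnoemb : ¬ embIn T R U)
    (D : Finset (Fin n)) (f : Fin n → Fin N)
    (hlD : ℓ ∉ D) (hpD : p ∈ D)
    (hconn : ∀ x ∈ D, ∀ y ∈ D, ∃ w : T.Walk x y, ∀ z ∈ w.support, z ∈ D)
    (hinj : ∀ a ∈ D, ∀ b ∈ D, f a = f b → a = b)
    (hmap : ∀ a ∈ D, f a ∈ S)
    (hpres : ∀ a b, T.Adj a b → a ∈ D → b ∈ D → R.Adj (f a) (f b)) :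
    ∃ g : Fin n → Fin N,
      (∀ a ∈ D, g a = f a) ∧
      (∀ a b, a ≠ ℓ → b ≠ ℓ → g a = g b → a = b) ∧
      (∀ a, a ≠ ℓ → g a ∈ S) ∧
      (∀ a b, T.Adj a b → a ≠ ℓ → b ≠ ℓ → R.Adj (g a) (g b)) ∧
      (∀ w ∈ U, R.Adj (g p) w → ∃ a, a ≠ ℓ ∧ g a = w) := by
  obtain ⟨g, hg1, hg2, hg3, hg4⟩ := greedy hT hn S hdeg ℓ _ D f rfl hlD ⟨p, hpD⟩
    (fun y hy => (hluniq y hy.symm) ▸ hpD) hconn hinj hmap hpres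
  refine ⟨g, hg1, hg2, hg3, hg4, ?_⟩
  intro w hwU hadj
  by_contra hno
  push_neg at hno
  apply hnoemb
  have hpl : p ≠ ℓ := fun h => T.irrefl (h ▸ hlp)
  refine ⟨Function.update g ℓ w, ?_, ?_, ?_⟩
  · intro a b hab
    by_cases ha : a = ℓ <;> by_cases hb : b = ℓ
    · rw [ha, hb]
    · exfalso
      rw [ha, Function.update_self, Function.update_of_ne hb] at hab
      exact hno b hb hab.symm
    · exfalso
      rw [hb, Function.update_self, Function.update_of_ne ha] at hab
      exact hno a ha hab
    · rw [Function.update_of_ne ha, Function.update_of_ne hb] at hab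
      exact hg2 a b ha hb hab
  · intro a
    by_cases ha : a = ℓ
    · rw [ha, Function.update_self]; exact hwU
    · rw [Function.update_of_ne ha]; exact hSU (hg3 a ha)
  · intro a b hab
    by_cases ha : a = ℓ <;> by_cases hb : b = ℓ
    · exfalso; rw [ha, hb] at hab; exact T.irrefl hab
    · rw [ha] at hab
      have hbp : b = p := hluniq b hab
      rw [ha, hbp, Function.update_self, Function.update_of_ne hpl]
      exact hadj.symm
    · rw [hb] at hab
      have hap : a = p := hluniq a hab.symm
      rw [hb, hap, Function.update_self, Function.update_of_ne hpl]
      exact hadj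
    · rw [Function.update_of_ne ha, Function.update_of_ne hb]
      exact hg4 a b hab ha hb

/-- Structure fact: in a min-degree `≥ n-2` set `S₀`, if `T` does not embed in `U`,
the red `U`-neighbourhood of any `v ∈ S₀` lies in `S₀` and has exactly `n-2` elements. -/
lemma S0_nbhd (hT : T.IsTree) (hn : 3 ≤ n) (U S₀ : Finset (Fin N)) (hSU : S₀ ⊆ U)
    (hdeg : ∀ v ∈ S₀, n - 2 ≤ (S₀.filter (fun w => R.Adj v w)).card)
    (ℓ p : Fin n) (hlp : T.Adj ℓ p) (hluniq : ∀ x, T.Adj ℓ x → x = p)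
    (hnoemb : ¬ embIn T R U) :
    ∀ v ∈ S₀, (U.filter (fun w => R.Adj v w)) ⊆ S₀ ∧
      (U.filter (fun w => R.Adj v w)).card = n - 2 := by
  intro v hv
  have hpl : p ≠ ℓ := fun h => T.irrefl (h ▸ hlp)
  obtain ⟨g, hg1, hg2, hg3, hg4, hg5⟩ := extend_contra hT hn U S₀ hSU hdeg ℓ p hlp hluniq
    hnoemb {p} (fun _ => v) (by simp [Ne.symm hpl]) (Finset.mem_singleton_self p)
    (by intro x hx y hy
        simp only [Finset.mem_singleton] at hx hy
        subst hx; subst hy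
        exact ⟨SimpleGraph.Walk.nil, by simp⟩)
    (by intro a ha b hb _
        simp only [Finset.mem_singleton] at ha hb
        rw [ha, hb])
    (fun a _ => hv)
    (by intro a b hab ha hb
        simp only [Finset.mem_singleton] at ha hb
        exfalso
        rw [ha, hb] at hab
        exact T.irrefl hab)
  have hgp : g p = v := hg1 p (Finset.mem_singleton_self p)
  have hsub : U.filter (fun w => R.Adj v w) ⊆
      ((Finset.univ.erase ℓ).image g).erase v := by
    intro w hw
    obtain ⟨hwU, hwadj⟩ := Finset.mem_filter.mp hw
    obtain ⟨a, ha, hga⟩ := hg5 w hwU (by rwa [hgp])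
    refine Finset.mem_erase.mpr ⟨fun h => R.irrefl (h ▸ hwadj), ?_⟩
    exact Finset.mem_image.mpr ⟨a, by simp [ha], hga⟩
  constructor
  · intro w hw
    obtain ⟨hwU, hwadj⟩ := Finset.mem_filter.mp hw
    obtain ⟨a, ha, hga⟩ := hg5 w hwU (by rwa [hgp])
    rw [← hga]
    exact hg3 a ha
  · have hile : (((Finset.univ.erase ℓ).image g).erase v).card ≤ n - 2 := by
      have hginj : Set.InjOn g ((Finset.univ.erase ℓ) : Finset (Fin n)) := by
        intro x hx y hy h
        simp only [Finset.coe_erase, Set.mem_diff, Finset.coe_univ, Set.mem_univ,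
          true_and, Set.mem_singleton_iff] at hx hy
        exact hg2 x y hx hy h
      have hci : ((Finset.univ.erase ℓ).image g).card = n - 1 := by
        rw [Finset.card_image_of_injOn hginj, Finset.card_erase_of_mem (Finset.mem_univ ℓ)]
        simp
      have hvmem : v ∈ (Finset.univ.erase ℓ).image g := by
        refine Finset.mem_image.mpr ⟨p, by simp [hpl], hgp⟩
      rw [Finset.card_erase_of_mem hvmem, hci]
      omega
    have hge : n - 2 ≤ (U.filter (fun w => R.Adj v w)).card := by
      calc n - 2 ≤ (S₀.filter (fun w => R.Adj v w)).card := hdeg v hv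
        _ ≤ (U.filter (fun w => R.Adj v w)).card :=
            Finset.card_le_card (Finset.filter_subset_filter _ hSU)
    have := Finset.card_le_card hsub
    omega


/-- The detour argument: impossible configuration when `T` is not a star. -/
lemma detour (hT : T.IsTree) (hn : 3 ≤ n) (U S₀ : Finset (Fin N)) (hSU : S₀ ⊆ U)
    (hdeg : ∀ v ∈ S₀, n - 2 ≤ (S₀.filter (fun w => R.Adj v w)).card)
    (ℓ p : Fin n) (hlp : T.Adj ℓ p) (hluniq : ∀ x, T.Adj ℓ x → x = p)
    (hnoemb : ¬ embIn T R U)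
    (c q : Fin n) (hpc : T.Adj p c) (hcq : T.Adj c q) (hpq : ¬ T.Adj p q) (hqp : q ≠ p)
    (v z w : Fin N) (hv : v ∈ S₀) (hz : R.Adj v z) (hzS : z ∈ S₀)
    (hw : R.Adj z w) (hwv : ¬ R.Adj v w) (hwne : w ≠ v) (hwS : w ∈ S₀) : False := by
  have hpl : p ≠ ℓ := fun h => T.irrefl (h ▸ hlp)
  have hcp : c ≠ p := fun h => T.irrefl (h ▸ hpc)
  have hqc : q ≠ c := fun h => T.irrefl (h ▸ hcq)
  have hcl : c ≠ ℓ := by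
    rintro rfl
    exact hqp (hluniq q hcq)
  have hql : q ≠ ℓ := by
    rintro rfl
    exact hpq hlp.symm
  have hzv : z ≠ v := fun h => R.irrefl (h ▸ hz)
  have hwz : w ≠ z := fun h => R.irrefl (h ▸ hw)
  set D : Finset (Fin n) := {p, c, q} with hD
  set f : Fin n → Fin N := fun x => if x = p then v else if x = c then z else w with hf
  have hfp : f p = v := by simp [hf]
  have hfc : f c = z := by simp [hf, hcp]
  have hfq : f q = w := by simp [hf, hqp, hqc]
  have hfval : ∀ x ∈ D, f x = v ∨ f x = z ∨ f x = w := by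
    intro x hx
    simp only [hD, Finset.mem_insert, Finset.mem_singleton] at hx
    rcases hx with rfl | rfl | rfl
    · left; exact hfp
    · right; left; exact hfc
    · right; right; exact hfq
  have hmemD : ∀ x, x ∈ D ↔ x = p ∨ x = c ∨ x = q := by
    intro x; simp [hD, Finset.mem_insert, Finset.mem_singleton]
  -- connectivity of the seed
  have hwalkpc : ∃ wk : T.Walk p c, ∀ z' ∈ wk.support, z' ∈ D := by
    refine ⟨SimpleGraph.Walk.cons hpc SimpleGraph.Walk.nil, ?_⟩
    intro z' hz'
    rw [hmemD]
    simp only [SimpleGraph.Walk.support_cons, SimpleGraph.Walk.support_nil,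
      List.mem_cons, List.mem_singleton, List.not_mem_nil, or_false] at hz'
    tauto
  have hwalkcq : ∃ wk : T.Walk c q, ∀ z' ∈ wk.support, z' ∈ D := by
    refine ⟨SimpleGraph.Walk.cons hcq SimpleGraph.Walk.nil, ?_⟩
    intro z' hz'
    rw [hmemD]
    simp only [SimpleGraph.Walk.support_cons, SimpleGraph.Walk.support_nil,
      List.mem_cons, List.mem_singleton, List.not_mem_nil, or_false] at hz'
    tauto
  have hwalkpq : ∃ wk : T.Walk p q, ∀ z' ∈ wk.support, z' ∈ D := by
    refine ⟨SimpleGraph.Walk.cons hpc (SimpleGraph.Walk.cons hcq SimpleGraph.Walk.nil), ?_⟩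
    intro z' hz'
    rw [hmemD]
    simp only [SimpleGraph.Walk.support_cons, SimpleGraph.Walk.support_nil,
      List.mem_cons, List.mem_singleton, List.not_mem_nil, or_false] at hz'
    tauto
  have hrev : ∀ {x y : Fin n}, (∃ wk : T.Walk x y, ∀ z' ∈ wk.support, z' ∈ D) →
      (∃ wk : T.Walk y x, ∀ z' ∈ wk.support, z' ∈ D) := by
    rintro x y ⟨wk, hwk⟩
    refine ⟨wk.reverse, fun z' hz' => hwk z' ?_⟩
    rw [SimpleGraph.Walk.support_reverse] at hz'
    exact List.mem_reverse.mp hz'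
  have hnil : ∀ {x : Fin n}, x ∈ D → (∃ wk : T.Walk x x, ∀ z' ∈ wk.support, z' ∈ D) := by
    intro x hx
    exact ⟨SimpleGraph.Walk.nil, by simpa using hx⟩
  have hconn : ∀ x ∈ D, ∀ y ∈ D, ∃ wk : T.Walk x y, ∀ z' ∈ wk.support, z' ∈ D := by
    intro x hx y hy
    rw [hmemD] at hx hy
    rcases hx with rfl | rfl | rfl <;> rcases hy with rfl | rfl | rfl
    · exact hnil (by rw [hmemD]; tauto)
    · exact hwalkpc
    · exact hwalkpq
    · exact hrev hwalkpc
    · exact hnil (by rw [hmemD]; tauto)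
    · exact hwalkcq
    · exact hrev hwalkpq
    · exact hrev hwalkcq
    · exact hnil (by rw [hmemD]; tauto)
  obtain ⟨g, hg1, hg2, hg3, hg4, hg5⟩ := extend_contra hT hn U S₀ hSU hdeg ℓ p hlp hluniq
    hnoemb D f
    (by rw [hmemD]; push_neg; exact ⟨Ne.symm hpl, Ne.symm hcl, Ne.symm hql⟩)
    (by rw [hmemD]; tauto)
    hconn
    (by intro a ha b hb hfab
        rw [hmemD] at ha hb
        rcases ha with rfl | rfl | rfl <;> rcases hb with rfl | rfl | rfl <;>
          simp only [hfp, hfc, hfq] at hfab ⊢ <;> first | rfl | (exfalso ; tauto))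
    (by intro a ha
        rcases hfval a ha with h | h | h <;> rw [h] <;> assumption)
    (by intro a b hab ha hb
        rw [hmemD] at ha hb
        rcases ha with rfl | rfl | rfl <;> rcases hb with rfl | rfl | rfl
        · exact absurd hab T.irrefl
        · rw [hfp, hfc]; exact hz
        · exact absurd hab hpq
        · rw [hfp, hfc]; exact hz.symm
        · exact absurd hab T.irrefl
        · rw [hfc, hfq]; exact hw
        · exact absurd hab (fun h => hpq h.symm)
        · rw [hfc, hfq]; exact hw.symm
        · exact absurd hab T.irrefl)
  have hgp : g p = v := by rw [hg1 p (by rw [hmemD]; tauto), hfp]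
  have hgq : g q = w := by rw [hg1 q (by rw [hmemD]; tauto), hfq]
  -- now count the neighbourhood of v
  obtain ⟨hnsub, hncard⟩ := S0_nbhd hT hn U S₀ hSU hdeg ℓ p hlp hluniq hnoemb v hv
  set IMG := (Finset.univ.erase ℓ).image g with hIMG
  have hginj : Set.InjOn g ((Finset.univ.erase ℓ) : Finset (Fin n)) := by
    intro x hx y hy h
    simp only [Finset.coe_erase, Set.mem_diff, Finset.coe_univ, Set.mem_univ,
      true_and, Set.mem_singleton_iff] at hx hy
    exact hg2 x y hx hy h
  have hci : IMG.card = n - 1 := by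
    rw [hIMG, Finset.card_image_of_injOn hginj, Finset.card_erase_of_mem (Finset.mem_univ ℓ)]
    simp
  have hvmem : v ∈ IMG := Finset.mem_image.mpr ⟨p, by simp [hpl], hgp⟩
  have hwmem : w ∈ IMG := Finset.mem_image.mpr ⟨q, by simp [hql], hgq⟩
  have hsub : U.filter (fun w' => R.Adj v w') ⊆ (IMG.erase v).erase w := by
    intro w' hw'
    obtain ⟨hw'U, hw'adj⟩ := Finset.mem_filter.mp hw'
    obtain ⟨a, ha, hga⟩ := hg5 w' hw'U (by rwa [hgp])
    refine Finset.mem_erase.mpr ⟨?_, Finset.mem_erase.mpr ⟨fun h => R.irrefl (h ▸ hw'adj), ?_⟩⟩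
    · rintro rfl; exact hwv hw'adj
    · exact Finset.mem_image.mpr ⟨a, by simp [ha], hga⟩
  have hcount := Finset.card_le_card hsub
  rw [Finset.card_erase_of_mem (Finset.mem_erase.mpr ⟨hwne, hwmem⟩),
    Finset.card_erase_of_mem hvmem, hci, hncard] at hcount
  omega


/-- If some subset `S` has all red degrees at least `n-1`, the tree embeds. -/
lemma embed_of_highdeg (hT : T.IsTree) (hn : 3 ≤ n) (U S : Finset (Fin N)) (hSU : S ⊆ U)
    (hS : S.Nonempty)
    (hdeg : ∀ v ∈ S, n - 1 ≤ (S.filter (fun w => R.Adj v w)).card) :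
    embIn T R U := by
  obtain ⟨ℓ, p, hlp, hluniq⟩ := exists_leaf hT hn
  have hpl : p ≠ ℓ := fun h => T.irrefl (h ▸ hlp)
  obtain ⟨v, hv⟩ := hS
  have hdeg' : ∀ v ∈ S, n - 2 ≤ (S.filter (fun w => R.Adj v w)).card := by
    intro v hv
    have := hdeg v hv
    omega
  obtain ⟨g, hg1, hg2, hg3, hg4⟩ := greedy hT hn S hdeg' ℓ _ {p} (fun _ => v) rfl
    (by simp [Ne.symm hpl]) ⟨p, Finset.mem_singleton_self p⟩
    (fun y hy => by rw [hluniq y hy.symm]; exact Finset.mem_singleton_self p)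
    (by intro x hx y hy
        simp only [Finset.mem_singleton] at hx hy
        subst hx; subst hy
        exact ⟨SimpleGraph.Walk.nil, by simp⟩)
    (by intro a ha b hb _
        simp only [Finset.mem_singleton] at ha hb
        rw [ha, hb])
    (fun a _ => hv)
    (by intro a b hab ha hb
        simp only [Finset.mem_singleton] at ha hb
        exfalso
        rw [ha, hb] at hab
        exact T.irrefl hab)
  -- extend to the leaf
  have hgp : g p ∈ S := hg3 p hpl
  have hfilter : n - 1 ≤ (S.filter (fun w => R.Adj (g p) w)).card := hdeg _ hgp
  have hy : ∃ y ∈ S.filter (fun w => R.Adj (g p) w),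
      y ∉ (Finset.univ.erase ℓ).image g := by
    by_contra hcon
    push_neg at hcon
    have hginj : Set.InjOn g ((Finset.univ.erase ℓ) : Finset (Fin n)) := by
      intro x hx y hy h
      simp only [Finset.coe_erase, Set.mem_diff, Finset.coe_univ, Set.mem_univ,
        true_and, Set.mem_singleton_iff] at hx hy
      exact hg2 x y hx hy h
    have hci : ((Finset.univ.erase ℓ).image g).card = n - 1 := by
      rw [Finset.card_image_of_injOn hginj, Finset.card_erase_of_mem (Finset.mem_univ ℓ)]
      simp
    have hgpmem : g p ∈ (Finset.univ.erase ℓ).image g :=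
      Finset.mem_image.mpr ⟨p, by simp [hpl], rfl⟩
    have hsub : S.filter (fun w => R.Adj (g p) w) ⊆
        ((Finset.univ.erase ℓ).image g).erase (g p) := by
      intro y hyf
      exact Finset.mem_erase.mpr
        ⟨fun h => R.irrefl (h ▸ (Finset.mem_filter.mp hyf).2), hcon y hyf⟩
    have := Finset.card_le_card hsub
    rw [Finset.card_erase_of_mem hgpmem, hci] at this
    omega
  obtain ⟨y, hyf, hyimg⟩ := hy
  obtain ⟨hyS, hyadj⟩ := Finset.mem_filter.mp hyf
  refine ⟨Function.update g ℓ y, ?_, ?_, ?_⟩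
  · intro a b hab
    by_cases ha : a = ℓ <;> by_cases hb : b = ℓ
    · rw [ha, hb]
    · exfalso
      rw [ha, Function.update_self, Function.update_of_ne hb] at hab
      exact hyimg (hab ▸ Finset.mem_image.mpr ⟨b, by simp [hb], rfl⟩)
    · exfalso
      rw [hb, Function.update_self, Function.update_of_ne ha] at hab
      exact hyimg (hab.symm ▸ Finset.mem_image.mpr ⟨a, by simp [ha], rfl⟩)
    · rw [Function.update_of_ne ha, Function.update_of_ne hb] at hab
      exact hg2 a b ha hb hab
  · intro a
    by_cases ha : a = ℓ
    · rw [ha, Function.update_self]; exact hSU hyS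
    · rw [Function.update_of_ne ha]; exact hSU (hg3 a ha)
  · intro a b hab
    by_cases ha : a = ℓ <;> by_cases hb : b = ℓ
    · exfalso; rw [ha, hb] at hab; exact T.irrefl hab
    · rw [ha] at hab
      have hbp : b = p := hluniq b hab
      rw [ha, hbp, Function.update_self, Function.update_of_ne hpl]
      exact hyadj.symm
    · rw [hb] at hab
      have hap : a = p := hluniq a hab.symm
      rw [hb, hap, Function.update_self, Function.update_of_ne hpl]
      exact hyadj
    · rw [Function.update_of_ne ha, Function.update_of_ne hb]
      exact hg4 a b hab ha hb

/-- Peeling lemma: a hereditary low-degree set contains large independent sets. -/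
lemma peel (R : SimpleGraph (Fin N)) (d : ℕ) :
    ∀ (j : ℕ) (U : Finset (Fin N)),
      (∀ S ⊆ U, S.Nonempty → ∃ v ∈ S, (S.filter (fun w => R.Adj v w)).card ≤ d) →
      (d+1) * (j-1) + 1 ≤ U.card →
      ∃ A, A ⊆ U ∧ A.card = j ∧ indepR R A := by
  intro j
  induction j with
  | zero => exact fun U _ _ => ⟨∅, Finset.empty_subset U, Finset.card_empty, by
      intro x hx; exact absurd hx (Finset.notMem_empty x)⟩
  | succ j ih =>
    intro U hlow hcard
    have hUne : U.Nonempty := Finset.card_pos.mp (by omega)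
    obtain ⟨v, hvU, hvdeg⟩ := hlow U (Finset.Subset.refl U) hUne
    rcases Nat.eq_zero_or_pos j with hj | hj
    · subst hj
      refine ⟨{v}, Finset.singleton_subset_iff.mpr hvU, Finset.card_singleton v, ?_⟩
      intro x hx y hy
      simp only [Finset.mem_singleton] at hx hy
      rw [hx, hy]
      exact R.irrefl
    · set X : Finset (Fin N) := insert v (U.filter (fun w => R.Adj v w)) with hX
      have hXU : X ⊆ U := by
        rw [hX]
        exact Finset.insert_subset hvU (Finset.filter_subset _ U)
      have hXcard : X.card ≤ d + 1 := by
        calc X.card ≤ (U.filter (fun w => R.Adj v w)).card + 1 := Finset.card_insert_le _ _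
          _ ≤ d + 1 := by omega
      have hU'card : (d+1) * (j-1) + 1 ≤ (U \ X).card := by
        rw [Finset.card_sdiff_of_subset hXU]
        obtain ⟨jj, rfl⟩ : ∃ jj, j = jj + 1 := ⟨j - 1, by omega⟩
        have h1 : (d+1) * (jj+1) = (d+1) * jj + (d+1) := by ring
        simp only [Nat.add_sub_cancel] at hcard ⊢
        omega
      obtain ⟨A, hAU, hAcard, hAindep⟩ := ih (U \ X)
        (fun S hS hSne => hlow S (hS.trans (Finset.sdiff_subset)) hSne) hU'card
      have hvA : v ∉ A := by
        intro h
        have := hAU h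
        rw [Finset.mem_sdiff] at this
        exact this.2 (by rw [hX]; exact Finset.mem_insert_self _ _)
      refine ⟨insert v A, Finset.insert_subset hvU (hAU.trans Finset.sdiff_subset), ?_, ?_⟩
      · rw [Finset.card_insert_of_notMem hvA, hAcard]
      · intro x hx y hy
        rcases Finset.mem_insert.mp hx with hxv | hxA <;>
          rcases Finset.mem_insert.mp hy with hyv | hyA
        · rw [hxv, hyv]; exact R.irrefl
        · rw [hxv]
          intro hadj
          have hmem := hAU hyA
          rw [Finset.mem_sdiff] at hmem
          exact hmem.2 (by
            rw [hX]
            exact Finset.mem_insert_of_mem (Finset.mem_filter.mpr ⟨hmem.1, hadj⟩))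
        · rw [hyv]
          intro hadj
          have hmem := hAU hxA
          rw [Finset.mem_sdiff] at hmem
          exact hmem.2 (by
            rw [hX]
            exact Finset.mem_insert_of_mem (Finset.mem_filter.mpr ⟨hmem.1, hadj.symm⟩))
        · exact hAindep x hxA y hyA

/-- Chvátal-type: if `T` does not embed in `U` then `U` contains a blue `K_k`
as soon as `|U| ≥ (n-1)(k-1)+1`. -/
lemma chvatal (hT : T.IsTree) (hn : 3 ≤ n) (U : Finset (Fin N))
    (hnoemb : ¬ embIn T R U) (k : ℕ)
    (hcard : (n-1) * (k-1) + 1 ≤ U.card) :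
    ∃ A, A ⊆ U ∧ A.card = k ∧ indepR R A := by
  have hlow : ∀ S ⊆ U, S.Nonempty → ∃ v ∈ S, (S.filter (fun w => R.Adj v w)).card ≤ n - 2 := by
    intro S hS hSne
    by_contra hcon
    push_neg at hcon
    apply hnoemb
    refine embed_of_highdeg hT hn U S hS hSne ?_
    intro v hv
    have := hcon v hv
    omega
  have harith : (n - 2 + 1) * (k - 1) + 1 ≤ U.card := by
    have : n - 2 + 1 = n - 1 := by omega
    rw [this]; exact hcard
  exact peel R (n-2) k U hlow harith


/-- The two-disjoint-independent-sets lemma for graphs of bounded max degree. -/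
lemma lemD (R : SimpleGraph (Fin N)) (d : ℕ) (hd : 1 ≤ d) (U : Finset (Fin N))
    (hΔ : ∀ v ∈ U, (U.filter (fun w => R.Adj v w)).card ≤ d) :
    ∃ A B : Finset (Fin N), A ⊆ U ∧ B ⊆ U ∧ Disjoint A B ∧ indepR R A ∧ indepR R B ∧
      B.card ≤ A.card ∧ U.card ≤ (d+1) * B.card + (if B.card < A.card then 1 else 0) := by
  have hcand1 : (∅ : Finset (Fin N)) ∈ (U.powerset.filter (fun A => indepR R A)) := by
    simp only [Finset.mem_filter, Finset.mem_powerset]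
    exact ⟨Finset.empty_subset U, fun x hx => absurd hx (Finset.notMem_empty x)⟩
  obtain ⟨D₁, hD₁mem, hD₁max⟩ := Finset.exists_max_image
    (U.powerset.filter (fun A => indepR R A)) Finset.card ⟨∅, hcand1⟩
  rw [Finset.mem_filter, Finset.mem_powerset] at hD₁mem
  obtain ⟨hD₁U, hD₁ind⟩ := hD₁mem
  have hD₁maximal : ∀ v ∈ U, v ∉ D₁ → ∃ u ∈ D₁, R.Adj v u := by
    intro v hvU hvD
    by_contra hcon
    push_neg at hcon
    have hins : insert v D₁ ∈ U.powerset.filter (fun A => indepR R A) := by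
      rw [Finset.mem_filter, Finset.mem_powerset]
      refine ⟨Finset.insert_subset hvU hD₁U, ?_⟩
      intro x hx y hy
      rcases Finset.mem_insert.mp hx with hxv | hxD <;>
        rcases Finset.mem_insert.mp hy with hyv | hyD
      · rw [hxv, hyv]; exact R.irrefl
      · rw [hxv]; exact hcon y hyD
      · rw [hyv]; intro hadj; exact hcon x hxD hadj.symm
      · exact hD₁ind x hxD y hyD
    have := hD₁max _ hins
    rw [Finset.card_insert_of_notMem hvD] at this
    omega
  have hcand2 : (∅ : Finset (Fin N)) ∈ ((U \ D₁).powerset.filter (fun A => indepR R A)) := by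
    simp only [Finset.mem_filter, Finset.mem_powerset]
    exact ⟨Finset.empty_subset _, fun x hx => absurd hx (Finset.notMem_empty x)⟩
  obtain ⟨D₂, hD₂mem, hD₂max⟩ := Finset.exists_max_image
    ((U \ D₁).powerset.filter (fun A => indepR R A)) Finset.card ⟨∅, hcand2⟩
  rw [Finset.mem_filter, Finset.mem_powerset] at hD₂mem
  obtain ⟨hD₂U, hD₂ind⟩ := hD₂mem
  have hD₂maximal : ∀ v ∈ U \ D₁, v ∉ D₂ → ∃ u ∈ D₂, R.Adj v u := by
    intro v hvU hvD
    by_contra hcon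
    push_neg at hcon
    have hins : insert v D₂ ∈ (U \ D₁).powerset.filter (fun A => indepR R A) := by
      rw [Finset.mem_filter, Finset.mem_powerset]
      refine ⟨Finset.insert_subset hvU hD₂U, ?_⟩
      intro x hx y hy
      rcases Finset.mem_insert.mp hx with hxv | hxD <;>
        rcases Finset.mem_insert.mp hy with hyv | hyD
      · rw [hxv, hyv]; exact R.irrefl
      · rw [hxv]; exact hcon y hyD
      · rw [hyv]; intro hadj; exact hcon x hxD hadj.symm
      · exact hD₂ind x hxD y hyD
    have := hD₂max _ hins
    rw [Finset.card_insert_of_notMem hvD] at this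
    omega
  have hD₂card : D₂.card ≤ D₁.card := by
    refine hD₁max D₂ ?_
    rw [Finset.mem_filter, Finset.mem_powerset]
    exact ⟨hD₂U.trans Finset.sdiff_subset, hD₂ind⟩
  have hdisj12 : Disjoint D₁ D₂ := by
    rw [Finset.disjoint_right]
    intro x hx
    exact fun hx1 => ((Finset.mem_sdiff.mp (hD₂U hx)).2 hx1)
  have hM0 : (∅ : Finset (Fin N)) ∈ D₁.powerset.filter
      (fun M => indepR R (D₂ ∪ M) ∧ (D₂ ∪ M).card ≤ (D₁ \ M).card) := by
    simp only [Finset.mem_filter, Finset.mem_powerset, Finset.union_empty, Finset.sdiff_empty]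
    exact ⟨Finset.empty_subset _, hD₂ind, hD₂card⟩
  obtain ⟨M, hMmem, hMmax⟩ := Finset.exists_max_image
    (D₁.powerset.filter (fun M => indepR R (D₂ ∪ M) ∧ (D₂ ∪ M).card ≤ (D₁ \ M).card))
    Finset.card ⟨∅, hM0⟩
  rw [Finset.mem_filter, Finset.mem_powerset] at hMmem
  obtain ⟨hMD₁, hQind, hQP⟩ := hMmem
  set P : Finset (Fin N) := D₁ \ M with hP
  set Q : Finset (Fin N) := D₂ ∪ M with hQ
  have hPU : P ⊆ U := Finset.sdiff_subset.trans hD₁U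
  have hQU : Q ⊆ U := Finset.union_subset (hD₂U.trans Finset.sdiff_subset) (hMD₁.trans hD₁U)
  have hdisjPQ : Disjoint P Q := by
    rw [hP, hQ, Finset.disjoint_union_right]
    exact ⟨Finset.disjoint_of_subset_left Finset.sdiff_subset hdisj12, Finset.sdiff_disjoint⟩
  have hdisjD2M : Disjoint D₂ M := by
    rw [Finset.disjoint_left]
    intro x hx
    exact fun hxM => (Finset.mem_sdiff.mp (hD₂U hx)).2 (hMD₁ hxM)
  have hQcard : Q.card = D₂.card + M.card := Finset.card_union_of_disjoint hdisjD2M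
  have hPcard : P.card + M.card = D₁.card := by
    rw [hP, Finset.card_sdiff_of_subset hMD₁]
    have := Finset.card_le_card hMD₁
    omega
  set OUT : Finset (Fin N) := (U \ D₁) \ D₂ with hOUT
  have hOUTdom : ∀ v ∈ OUT, ∃ u ∈ D₂, R.Adj v u := by
    intro v hv
    rw [hOUT, Finset.mem_sdiff] at hv
    exact hD₂maximal v hv.1 hv.2
  have hUcard : U.card = P.card + Q.card + OUT.card := by
    have h1 : OUT.card = (U \ D₁).card - D₂.card := by
      rw [hOUT, Finset.card_sdiff_of_subset hD₂U]
    have h2 : (U \ D₁).card = U.card - D₁.card := by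
      rw [Finset.card_sdiff_of_subset hD₁U]
    have h3 : D₁.card ≤ U.card := Finset.card_le_card hD₁U
    have h4 : D₂.card ≤ (U \ D₁).card := Finset.card_le_card hD₂U
    rw [hQcard]
    omega
  have hbound : U.card ≤ (d+1) * Q.card + (if Q.card < P.card then 1 else 0) := by
    by_cases hcase : Q.card + 2 ≤ P.card ∧ ∃ x ∈ P, ∀ u ∈ Q, ¬ R.Adj x u
    · exfalso
      obtain ⟨hc1, x, hxP, hxQ⟩ := hcase
      have hxD₁ : x ∈ D₁ := (Finset.mem_sdiff.mp hxP).1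
      have hxM : x ∉ M := (Finset.mem_sdiff.mp hxP).2
      have hins : insert x M ∈ D₁.powerset.filter
          (fun M' => indepR R (D₂ ∪ M') ∧ (D₂ ∪ M').card ≤ (D₁ \ M').card) := by
        rw [Finset.mem_filter, Finset.mem_powerset]
        refine ⟨Finset.insert_subset hxD₁ hMD₁, ?_, ?_⟩
        · intro a ha b hb
          rw [Finset.union_insert] at ha hb
          rcases Finset.mem_insert.mp ha with hax | haQ <;>
            rcases Finset.mem_insert.mp hb with hbx | hbQ
          · rw [hax, hbx]; exact R.irrefl
          · rw [hax]; exact hxQ b hbQ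
          · rw [hbx]; intro hadj; exact hxQ a haQ hadj.symm
          · exact hQind a haQ b hbQ
        · have hxQ' : x ∉ Q := fun h => (Finset.disjoint_left.mp hdisjPQ hxP) h
          have h5 : (D₂ ∪ insert x M).card = Q.card + 1 := by
            rw [Finset.union_insert, Finset.card_insert_of_notMem hxQ']
          have h6 : (D₁ \ insert x M) = (D₁ \ M).erase x := by
            ext y
            simp only [Finset.mem_sdiff, Finset.mem_insert, Finset.mem_erase, not_or]
            tauto
          have h7 : (D₁ \ insert x M).card = P.card - 1 := by
            rw [h6, Finset.card_erase_of_mem hxP]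
          rw [h5, h7]
          omega
      have := hMmax _ hins
      rw [Finset.card_insert_of_notMem hxM] at this
      omega
    · by_cases hPb : ∀ x ∈ P, ∃ u ∈ Q, R.Adj x u
      · -- case b
        have hcover : P ∪ OUT ⊆ Q.biUnion (fun u => U.filter (fun v => R.Adj u v)) := by
          intro v hv
          rcases Finset.mem_union.mp hv with hvP | hvO
          · obtain ⟨u, huQ, hadj⟩ := hPb v hvP
            exact Finset.mem_biUnion.mpr ⟨u, huQ,
              Finset.mem_filter.mpr ⟨hPU hvP, hadj.symm⟩⟩
          · obtain ⟨u, huD₂, hadj⟩ := hOUTdom v hvO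
            have hvU : v ∈ U := by
              rw [hOUT, Finset.mem_sdiff, Finset.mem_sdiff] at hvO
              exact hvO.1.1
            exact Finset.mem_biUnion.mpr ⟨u, Finset.mem_union_left _ huD₂,
              Finset.mem_filter.mpr ⟨hvU, hadj.symm⟩⟩
        have hdisjPO : Disjoint P OUT := by
          rw [Finset.disjoint_left]
          intro a haP haO
          rw [hOUT, Finset.mem_sdiff, Finset.mem_sdiff] at haO
          exact haO.1.2 (Finset.mem_sdiff.mp haP).1
        have hcount : P.card + OUT.card ≤ Q.card * d := by
          calc P.card + OUT.card = (P ∪ OUT).card :=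
                (Finset.card_union_of_disjoint hdisjPO).symm
            _ ≤ (Q.biUnion (fun u => U.filter (fun v => R.Adj u v))).card :=
                Finset.card_le_card hcover
            _ ≤ ∑ u ∈ Q, (U.filter (fun v => R.Adj u v)).card := Finset.card_biUnion_le
            _ ≤ ∑ _u ∈ Q, d := Finset.sum_le_sum (fun u hu => hΔ u (hQU hu))
            _ = Q.card * d := by rw [Finset.sum_const, smul_eq_mul]
        have hqd : (d+1) * Q.card = Q.card * d + Q.card := by ring
        have h0 : 0 ≤ (if Q.card < P.card then 1 else 0) := Nat.zero_le _
        omega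
      · -- case a
        push_neg at hPb
        have hple : P.card ≤ Q.card + 1 := by
          by_contra hgt
          push_neg at hgt
          obtain ⟨x, hxP, hxQ⟩ := hPb
          exact absurd ⟨by omega, x, hxP, hxQ⟩ hcase
        -- OUT is dominated by D₂, each D₂ vertex having a reserved neighbour in D₁
        have houtb : OUT.card ≤ D₂.card * (d - 1) := by
          have hcover : OUT ⊆ D₂.biUnion
              (fun u => (U.filter (fun v => R.Adj u v)) ∩ OUT) := by
            intro v hv
            obtain ⟨u, huD₂, hadj⟩ := hOUTdom v hv
            have hvU : v ∈ U := by
              rw [hOUT, Finset.mem_sdiff, Finset.mem_sdiff] at hv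
              exact hv.1.1
            exact Finset.mem_biUnion.mpr ⟨u, huD₂,
              Finset.mem_inter.mpr ⟨Finset.mem_filter.mpr ⟨hvU, hadj.symm⟩, hv⟩⟩
          calc OUT.card ≤ (D₂.biUnion (fun u => (U.filter (fun v => R.Adj u v)) ∩ OUT)).card :=
                Finset.card_le_card hcover
            _ ≤ ∑ u ∈ D₂, ((U.filter (fun v => R.Adj u v)) ∩ OUT).card :=
                Finset.card_biUnion_le
            _ ≤ ∑ _u ∈ D₂, (d - 1) := by
                refine Finset.sum_le_sum (fun u hu => ?_)
                have huU : u ∈ U := (Finset.mem_sdiff.mp (hD₂U hu)).1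
                have huD₁ : u ∉ D₁ := (Finset.mem_sdiff.mp (hD₂U hu)).2
                obtain ⟨y, hyD₁, hyadj⟩ := hD₁maximal u huU huD₁
                have hymem : y ∈ U.filter (fun v => R.Adj u v) :=
                  Finset.mem_filter.mpr ⟨hD₁U hyD₁, hyadj⟩
                have hyOUT : y ∉ OUT := by
                  rw [hOUT, Finset.mem_sdiff, Finset.mem_sdiff]
                  push_neg
                  intro h
                  exact absurd hyD₁ h.2
                have hsub : (U.filter (fun v => R.Adj u v)) ∩ OUT ⊆
                    (U.filter (fun v => R.Adj u v)).erase y := by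
                  intro z hz
                  obtain ⟨hz1, hz2⟩ := Finset.mem_inter.mp hz
                  exact Finset.mem_erase.mpr ⟨fun h => hyOUT (h ▸ hz2), hz1⟩
                calc ((U.filter (fun v => R.Adj u v)) ∩ OUT).card
                    ≤ ((U.filter (fun v => R.Adj u v)).erase y).card :=
                      Finset.card_le_card hsub
                  _ = (U.filter (fun v => R.Adj u v)).card - 1 :=
                      Finset.card_erase_of_mem hymem
                  _ ≤ d - 1 := by
                      have := hΔ u huU
                      omega
            _ = D₂.card * (d - 1) := by rw [Finset.sum_const, smul_eq_mul]
        rcases Nat.eq_zero_or_pos M.card with ht | ht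
        · -- M empty : Q = D₂
          have hsQ : D₂.card = Q.card := by omega
          have hD2d : D₂.card * (d-1) + 2 * D₂.card = (d+1) * D₂.card := by
            have h1 : d - 1 + 2 = d + 1 := by omega
            calc D₂.card * (d-1) + 2 * D₂.card = ((d-1) + 2) * D₂.card := by ring
              _ = (d+1) * D₂.card := by rw [h1]
          have hEq : (d+1) * D₂.card = (d+1) * Q.card := by rw [hsQ]
          rcases Nat.lt_or_ge Q.card P.card with hlt | hge
          · rw [if_pos hlt]
            omega
          · rw [if_neg (by omega)]
            omega
        · -- M nonempty
          rcases Nat.lt_or_ge d 2 with hd1 | hd2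
          · -- d = 1
            have hd1' : d = 1 := by omega
            have hout0 : OUT.card = 0 := by
              rw [hd1'] at houtb
              simpa using houtb
            rcases Nat.lt_or_ge Q.card P.card with hlt | hge
            · rw [if_pos hlt]
              have : (d+1) * Q.card = 2 * Q.card := by rw [hd1']
              omega
            · rw [if_neg (by omega)]
              have : (d+1) * Q.card = 2 * Q.card := by rw [hd1']
              omega
          · -- d ≥ 2
            obtain ⟨dd, rfl⟩ : ∃ dd, d = dd + 2 := ⟨d - 2, by omega⟩
            have hq1 : 1 ≤ Q.card := by omega
            obtain ⟨qq, hqq⟩ : ∃ qq, Q.card = qq + 1 := ⟨Q.card - 1, by omega⟩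
            have hsqq : D₂.card ≤ qq := by omega
            have h1 : OUT.card ≤ qq * (dd + 1) := by
              calc OUT.card ≤ D₂.card * (dd + 2 - 1) := houtb
                _ = D₂.card * (dd + 1) := by norm_num
                _ ≤ qq * (dd + 1) := Nat.mul_le_mul_right _ hsqq
            have hexp : (dd + 2 + 1) * Q.card = qq * (dd + 1) + 2 * qq + dd + 3 := by
              rw [hqq]; ring
            have htriv : U.card ≤ (dd + 2 + 1) * Q.card := by
              rw [hexp]
              have hU : U.card = P.card + Q.card + OUT.card := hUcard
              set Y := qq * (dd + 1) with hY
              omega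
            exact le_trans htriv (Nat.le_add_right _ _)
  exact ⟨P, Q, hPU, hQU, hdisjPQ, indepR_mono hD₁ind Finset.sdiff_subset, hQind, hQP, hbound⟩


/-- A star embeds at any vertex of high red degree. -/
lemma embed_star (hT : T.IsTree) (hn : 3 ≤ n) {c : Fin n}
    (hc : ∀ x, x ≠ c → T.Adj c x) (U : Finset (Fin N)) (u : Fin N) (hu : u ∈ U)
    (hdeg : n - 1 ≤ (U.filter (fun w => R.Adj u w)).card) :
    embIn T R U := by
  obtain ⟨V', hV'sub, hV'card⟩ :=
    Finset.exists_subset_card_eq hdeg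
  have hcard0 : ((Finset.univ.erase c) : Finset (Fin n)).card = n - 1 := by
    rw [Finset.card_erase_of_mem (Finset.mem_univ c)]; simp
  set e0 := Finset.equivFinOfCardEq hcard0 with he0
  set e1 := Finset.equivFinOfCardEq hV'card with he1
  set f : Fin n → Fin N := fun x =>
    if h : x = c then u else ((e1.symm (e0 ⟨x, by simp [h]⟩)) : Fin N) with hf
  have hfc : f c = u := by simp [hf]
  have hfne : ∀ x, x ≠ c → (f x : Fin N) ∈ V' := by
    intro x hx
    rw [hf]
    simp only [hx, dif_neg, not_false_iff]
    exact (e1.symm (e0 ⟨x, by simp [hx]⟩)).2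
  refine ⟨f, ?_, ?_, ?_⟩
  · intro a b hab
    by_cases ha : a = c <;> by_cases hb : b = c
    · rw [ha, hb]
    · exfalso
      have := hfne b hb
      rw [← hab, ha, hfc] at this
      exact R.irrefl (Finset.mem_filter.mp (hV'sub this)).2
    · exfalso
      have := hfne a ha
      rw [hab, hb, hfc] at this
      exact R.irrefl (Finset.mem_filter.mp (hV'sub this)).2
    · have hfa : f a = ((e1.symm (e0 ⟨a, by simp [ha]⟩)) : Fin N) := by simp [hf, ha]
      have hfb : f b = ((e1.symm (e0 ⟨b, by simp [hb]⟩)) : Fin N) := by simp [hf, hb]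
      rw [hfa, hfb] at hab
      have h1 := Subtype.coe_injective hab
      have h2 := e1.symm.injective h1
      have h3 := e0.injective h2
      exact congrArg Subtype.val h3
  · intro a
    by_cases ha : a = c
    · rw [ha, hfc]; exact hu
    · exact (Finset.mem_filter.mp (hV'sub (hfne a ha))).1
  · intro a b hab
    rcases star_edge hT hn hc a b hab with ha | hb
    · rw [ha, hfc]
      have hbc : b ≠ c := by
        rintro rfl
        rw [ha] at hab
        exact T.irrefl hab
      exact (Finset.mem_filter.mp (hV'sub (hfne b hbc))).2
    · rw [hb, hfc]
      have hac : a ≠ c := by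
        rintro rfl
        rw [hb] at hab
        exact T.irrefl hab
      exact ((Finset.mem_filter.mp (hV'sub (hfne a hac))).2).symm



/-- The star case of the main lemma. -/
lemma star_case (hT : T.IsTree) (hn : 3 ≤ n)
    (hstar : ∃ c : Fin n, ∀ x, x ≠ c → T.Adj c x)
    (U : Finset (Fin N)) (hnoemb : ¬ embIn T R U) (j k : ℕ) (hjk : j ≤ k) (hj1 : 1 ≤ j)
    (hcard : (n-1) * (k-1) + 1 + (if j = k then 1 else 0) ≤ U.card) :
    ∃ A B : Finset (Fin N), A ⊆ U ∧ B ⊆ U ∧ Disjoint A B ∧ indepR R A ∧ indepR R B ∧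
      A.card = j ∧ B.card = k := by
  obtain ⟨c, hc⟩ := hstar
  have hΔ : ∀ v ∈ U, (U.filter (fun w => R.Adj v w)).card ≤ n - 2 := by
    intro v hv
    by_contra hcon
    push_neg at hcon
    exact hnoemb (embed_star hT hn hc U v hv (by omega))
  obtain ⟨A, B, hAU, hBU, hdisj, hAind, hBind, hBA, hbound⟩ :=
    lemD R (n-2) (by omega) U hΔ
  rw [show n - 2 + 1 = n - 1 by omega] at hbound
  have hite2 : (if B.card < A.card then 1 else 0) ≤ 1 := by split <;> omega
  -- claims about sizes
  have hkB : k - 1 ≤ B.card := by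
    by_contra hlt
    push_neg at hlt
    have h1 : (n-1) * B.card ≤ (n-1)*(k-2) := Nat.mul_le_mul_left _ (by omega)
    have h2 : (n-1)*(k-2) + (n-1) = (n-1)*(k-1) := by
      rcases Nat.lt_or_ge k 2 with hk2 | hk2
      · interval_cases k <;> simp <;> omega
      · obtain ⟨kk, rfl⟩ : ∃ kk, k = kk + 2 := ⟨k - 2, by omega⟩
        have e1 : kk + 2 - 2 = kk := by omega
        have e2 : kk + 2 - 1 = kk + 1 := by omega
        rw [e1, e2]; ring
    omega
  have hkA : k ≤ A.card ∧ j ≤ B.card := by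
    by_cases hjke : j = k
    · subst hjke
      rw [if_pos rfl] at hcard
      have hjB : j ≤ B.card := by
        by_contra hlt
        push_neg at hlt
        have h1 : (n-1) * B.card ≤ (n-1)*(j-1) := Nat.mul_le_mul_left _ (by omega)
        omega
      exact ⟨le_trans hjB hBA, hjB⟩
    · rw [if_neg hjke] at hcard
      have hjB : j ≤ B.card := by omega
      rcases Nat.lt_or_ge B.card k with hBk | hBk
      · -- B.card = k - 1, so the "+1" must be active
        have hBeq : B.card = k - 1 := by omega
        have h1 : (n-1) * B.card = (n-1)*(k-1) := by rw [hBeq]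
        have hlt : B.card < A.card := by
          by_contra hge
          push_neg at hge
          rw [if_neg (by omega)] at hbound
          omega
        rw [if_pos hlt] at hbound
        constructor
        · by_contra hAk
          push_neg at hAk
          omega
        · exact hjB
      · exact ⟨le_trans hBk hBA, hjB⟩
  -- trim
  obtain ⟨B', hB'sub, hB'card⟩ := Finset.exists_subset_card_eq hkA.1
  obtain ⟨A', hA'sub, hA'card⟩ := Finset.exists_subset_card_eq hkA.2
  refine ⟨A', B', hA'sub.trans hBU, hB'sub.trans hAU, ?_, ?_, ?_, hA'card, hB'card⟩
  · exact Finset.disjoint_of_subset_left hA'sub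
      (Finset.disjoint_of_subset_right hB'sub hdisj.symm)
  · exact fun x hx y hy => hBind x (hA'sub hx) y (hA'sub hy)
  · exact fun x hx y hy => hAind x (hB'sub hx) y (hB'sub hy)


/-- If some vertex is not adjacent to `p`, there is a "cherry" `p - c - q` with
`q` not adjacent to `p`. -/
lemma exists_cherry (hT : T.IsTree) {p q₀ : Fin n} (hq₀ : q₀ ≠ p) (hnadj : ¬ T.Adj p q₀) :
    ∃ c q : Fin n, T.Adj p c ∧ T.Adj c q ∧ ¬ T.Adj p q ∧ q ≠ p := by
  obtain ⟨w⟩ := hT.isConnected.preconnected q₀ p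
  have H : ∀ (L : ℕ) (u : Fin n), u ≠ p → ¬ T.Adj p u → ∀ (w : T.Walk u p), w.length ≤ L →
      ∃ c q : Fin n, T.Adj p c ∧ T.Adj c q ∧ ¬ T.Adj p q ∧ q ≠ p := by
    intro L
    induction L with
    | zero =>
      intro u hu _ w hw
      cases w with
      | nil => exact absurd rfl hu
      | cons h p' => simp [SimpleGraph.Walk.length_cons] at hw
    | succ L ih =>
      intro u hu hnadju w hw
      cases w with
      | nil => exact absurd rfl hu
      | @cons _ y _ h w' =>
        -- h : T.Adj u y
        by_cases hyp : y = p
        · subst hyp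
          exact absurd h.symm hnadju
        · by_cases hyadj : T.Adj p y
          · exact ⟨y, u, hyadj, h.symm, hnadju, hu⟩
          · refine ih y hyp hyadj w' ?_
            simp only [SimpleGraph.Walk.length_cons] at hw
            omega
  exact H w.length q₀ hq₀ hnadj w le_rfl

/-- If no vertex of `T` is adjacent to all others, then the neighbour `p` of the leaf
has a non-neighbour. -/
lemma exists_nonadj (hnstar : ¬ ∃ c : Fin n, ∀ x, x ≠ c → T.Adj c x) (p : Fin n) :
    ∃ q₀, q₀ ≠ p ∧ ¬ T.Adj p q₀ := by
  by_contra hcon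
  push_neg at hcon
  exact hnstar ⟨p, fun x hx => hcon x hx⟩


/-- The main induction. -/
lemma main_Q (hT : T.IsTree) (hn : 3 ≤ n) (R : SimpleGraph (Fin N)) :
    ∀ (j : ℕ) (k : ℕ) (U : Finset (Fin N)), j ≤ k → 1 ≤ k → ¬ embIn T R U →
      (n-1) * (k-1) + 1 + (if j = k then 1 else 0) ≤ U.card →
      ∃ A B : Finset (Fin N), A ⊆ U ∧ B ⊆ U ∧ Disjoint A B ∧ indepR R A ∧ indepR R B ∧
        A.card = j ∧ B.card = k := by
  intro j
  induction j with
  | zero =>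
    intro k U hjk hk1 hnoemb hcard
    rw [if_neg (by omega)] at hcard
    obtain ⟨B, hBU, hBcard, hBind⟩ := chvatal hT hn U hnoemb k hcard
    refine ⟨∅, B, Finset.empty_subset U, hBU, Finset.disjoint_empty_left B, ?_, hBind,
      Finset.card_empty, hBcard⟩
    intro x hx
    exact absurd hx (Finset.notMem_empty x)
  | succ jj ih =>
    intro k U hjk hk1 hnoemb hcard
    have hcard0 : (n-1) * (k-1) + 1 ≤ U.card := by
      have : 0 ≤ (if jj + 1 = k then 1 else 0) := Nat.zero_le _
      omega
    obtain ⟨B₀, hB₀U, hB₀card, hB₀ind⟩ := chvatal hT hn U hnoemb k hcard0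
    set W : Finset (Fin N) := U \ B₀ with hW
    have hWU : W ⊆ U := Finset.sdiff_subset
    have hWcard : U.card = W.card + k := by
      rw [hW, Finset.card_sdiff_of_subset hB₀U, hB₀card]
      have := Finset.card_le_card hB₀U
      omega
    by_cases hKj : ∃ A, A ⊆ W ∧ A.card = jj + 1 ∧ indepR R A
    · obtain ⟨A, hAW, hAcard, hAind⟩ := hKj
      refine ⟨A, B₀, hAW.trans hWU, hB₀U, ?_, hAind, hB₀ind, hAcard, hB₀card⟩
      rw [Finset.disjoint_left]
      intro x hxA hxB
      exact (Finset.mem_sdiff.mp (hAW hxA)).2 hxB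
    · have hjj1 : 1 ≤ jj := by
        by_contra h0
        push_neg at h0
        have hjj0 : jj = 0 := by omega
        have hWne : W.Nonempty := by
          rw [← Finset.card_pos]
          rcases Nat.lt_or_ge k 2 with hk2 | hk2
          · have hke : k = 1 := by omega
            have hie : (if jj + 1 = k then 1 else 0) = 1 := if_pos (by omega)
            omega
          · have h2k : 2 * (k-1) ≤ (n-1) * (k-1) := Nat.mul_le_mul_right _ (by omega)
            omega
        obtain ⟨v, hv⟩ := hWne
        refine hKj ⟨{v}, Finset.singleton_subset_iff.mpr hv, by rw [hjj0]; simp, ?_⟩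
        intro x hx y hy
        simp only [Finset.mem_singleton] at hx hy
        rw [hx, hy]
        exact R.irrefl
      have hk2 : 2 ≤ k := by omega
      by_cases hS0 : ∃ S₀, S₀ ⊆ W ∧ S₀.Nonempty ∧
          ∀ v ∈ S₀, n - 2 ≤ (S₀.filter (fun w => R.Adj v w)).card
      · by_cases hstar : ∃ c : Fin n, ∀ x, x ≠ c → T.Adj c x
        · exact star_case hT hn hstar U hnoemb (jj+1) k hjk (by omega) hcard
        · obtain ⟨S₀, hS₀W, hS₀ne, hS₀deg⟩ := hS0
          have hS₀U : S₀ ⊆ U := hS₀W.trans hWU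
          obtain ⟨ℓ, p, hlp, hluniq⟩ := exists_leaf hT hn
          obtain ⟨q₀, hq₀p, hq₀n⟩ := exists_nonadj hstar p
          obtain ⟨c, q, hpc, hcq, hpq, hqp⟩ := exists_cherry hT hq₀p hq₀n
          obtain ⟨v, hv⟩ := hS₀ne
          have hF1 := S0_nbhd hT hn U S₀ hS₀U hS₀deg ℓ p hlp hluniq hnoemb
          obtain ⟨hnsub, hncard⟩ := hF1 v hv
          set X : Finset (Fin N) := insert v (U.filter (fun w => R.Adj v w)) with hX
          have hvfil : v ∉ U.filter (fun w => R.Adj v w) :=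
            fun h => R.irrefl (Finset.mem_filter.mp h).2
          have hXcard : X.card = n - 1 := by
            rw [hX, Finset.card_insert_of_notMem hvfil, hncard]
            omega
          have hXS₀ : X ⊆ S₀ := by
            rw [hX]
            exact Finset.insert_subset hv hnsub
          have hXU : X ⊆ U := hXS₀.trans hS₀U
          by_cases hclosed : ∀ x ∈ X, ∀ w ∈ U, R.Adj x w → w ∈ X
          · -- the closed K_{n-1} case : recurse
            have hUXcard : (U \ X).card + (n-1) = U.card := by
              rw [Finset.card_sdiff_of_subset hXU, hXcard]
              have := Finset.card_le_card hXU
              omega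
            have hiteeq : (if jj = k-1 then 1 else 0) = (if jj + 1 = k then 1 else 0) := by
              by_cases h : jj + 1 = k
              · rw [if_pos h, if_pos (by omega)]
              · rw [if_neg h, if_neg (by omega)]
            have he1 : k - 1 = (k-2) + 1 := by omega
            have hprodX : (n-1)*(k-1) = (n-1)*(k-2) + (n-1) := by
              rw [he1]; ring
            have harith : (n-1)*((k-1)-1)+1+(if jj = k-1 then 1 else 0) ≤ (U \ X).card := by
              have he2 : (k-1)-1 = k-2 := by omega
              rw [he2, hiteeq]
              omega
            have hnoemb' : ¬ embIn T R (U \ X) :=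
              fun h => hnoemb (embIn_mono h Finset.sdiff_subset)
            obtain ⟨A', B', hA'U, hB'U, hdisj', hA'ind, hB'ind, hA'card, hB'card⟩ :=
              ih (k-1) (U \ X) (by omega) (by omega) hnoemb' harith
            obtain ⟨c₁, hc₁X, c₂, hc₂X, hc12⟩ := Finset.one_lt_card.mp (by omega : 1 < X.card)
            have hc₁A' : c₁ ∉ A' := fun h => (Finset.mem_sdiff.mp (hA'U h)).2 hc₁X
            have hc₂B' : c₂ ∉ B' := fun h => (Finset.mem_sdiff.mp (hB'U h)).2 hc₂X
            have hc₁B' : c₁ ∉ B' := fun h => (Finset.mem_sdiff.mp (hB'U h)).2 hc₁X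
            have hc₂A' : c₂ ∉ A' := fun h => (Finset.mem_sdiff.mp (hA'U h)).2 hc₂X
            have hcross : ∀ x ∈ X, ∀ a, a ∈ U \ X → ¬ R.Adj x a := by
              intro x hx a ha hadj
              exact (Finset.mem_sdiff.mp ha).2 (hclosed x hx a (Finset.mem_sdiff.mp ha).1 hadj)
            refine ⟨insert c₁ A', insert c₂ B',
              Finset.insert_subset (hXU hc₁X) (hA'U.trans Finset.sdiff_subset),
              Finset.insert_subset (hXU hc₂X) (hB'U.trans Finset.sdiff_subset), ?_, ?_, ?_, ?_, ?_⟩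
            · rw [Finset.disjoint_left]
              intro x hx hx'
              rcases Finset.mem_insert.mp hx with hx1 | hxA <;>
                rcases Finset.mem_insert.mp hx' with hx2 | hxB
              · exact hc12 (hx1.symm.trans hx2)
              · exact hc₁B' (hx1 ▸ hxB)
              · exact hc₂A' (hx2 ▸ hxA)
              · exact (Finset.disjoint_left.mp hdisj' hxA) hxB
            · intro x hx y hy
              rcases Finset.mem_insert.mp hx with hx1 | hxA <;>
                rcases Finset.mem_insert.mp hy with hy1 | hyA
              · rw [hx1, hy1]; exact R.irrefl
              · rw [hx1]; exact hcross c₁ hc₁X y (hA'U hyA)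
              · rw [hy1]; intro hadj
                exact hcross c₁ hc₁X x (hA'U hxA) hadj.symm
              · exact hA'ind x hxA y hyA
            · intro x hx y hy
              rcases Finset.mem_insert.mp hx with hx1 | hxB <;>
                rcases Finset.mem_insert.mp hy with hy1 | hyB
              · rw [hx1, hy1]; exact R.irrefl
              · rw [hx1]; exact hcross c₂ hc₂X y (hB'U hyB)
              · rw [hy1]; intro hadj
                exact hcross c₂ hc₂X x (hB'U hxB) hadj.symm
              · exact hB'ind x hxB y hyB
            · rw [Finset.card_insert_of_notMem hc₁A', hA'card]
            · rw [Finset.card_insert_of_notMem hc₂B', hB'card]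
              omega
          · push_neg at hclosed
            obtain ⟨z, hzX, w, hwU, hzw, hwX⟩ := hclosed
            exfalso
            have hzv : z ≠ v := by
              rintro rfl
              exact hwX (by
                rw [hX]
                exact Finset.mem_insert_of_mem (Finset.mem_filter.mpr ⟨hwU, hzw⟩))
            have hzfil : z ∈ U.filter (fun w => R.Adj v w) := by
              rw [hX, Finset.mem_insert] at hzX
              tauto
            have hvz : R.Adj v z := (Finset.mem_filter.mp hzfil).2
            have hzS₀ : z ∈ S₀ := hnsub hzfil
            have hwv' : ¬ R.Adj v w := fun h => hwX (by
              rw [hX]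
              exact Finset.mem_insert_of_mem (Finset.mem_filter.mpr ⟨hwU, h⟩))
            have hwvne : w ≠ v := by
              rintro rfl
              exact hwX (by rw [hX]; exact Finset.mem_insert_self _ _)
            have hwS₀ : w ∈ S₀ := (hF1 z hzS₀).1 (Finset.mem_filter.mpr ⟨hwU, hzw⟩)
            exact detour hT hn U S₀ hS₀U hS₀deg ℓ p hlp hluniq hnoemb c q hpc hcq hpq hqp
              v z w hv hvz hzS₀ hzw hwv' hwvne hwS₀
      · push_neg at hS0
        have hlow : ∀ S ⊆ W, S.Nonempty →
            ∃ v' ∈ S, (S.filter (fun w => R.Adj v' w)).card ≤ n - 3 := by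
          intro S hS hSne
          obtain ⟨v', hv'S, hv'⟩ := hS0 S hS hSne
          exact ⟨v', hv'S, by omega⟩
        have harith : (n-3+1) * (jj+1-1) + 1 ≤ W.card := by
          have he3 : n - 3 + 1 = n - 2 := by omega
          have he4 : jj + 1 - 1 = jj := by omega
          rw [he3, he4]
          by_cases hje : jj + 1 = k
          · rw [if_pos hje] at hcard
            have hjje : jj = k - 1 := by omega
            have hpe : (n-1)*(k-1) = (n-2)*(k-1) + (k-1) := by
              have : n - 1 = (n-2) + 1 := by omega
              rw [this]; ring
            rw [hjje]
            omega
          · rw [if_neg hje] at hcard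
            have hjle : jj ≤ k - 2 := by omega
            have hprod1 : (n-2)*jj ≤ (n-2)*(k-2) := Nat.mul_le_mul_left _ hjle
            have hpe2 : (n-1)*(k-1) = (n-2)*(k-2) + (k-2) + (n-2) + 1 := by
              have h5 : n - 1 = (n-2) + 1 := by omega
              have h6 : k - 1 = (k-2) + 1 := by omega
              rw [h5, h6]; ring
            omega
        obtain ⟨A, hAW, hAcard, hAind⟩ := peel R (n-3) (jj+1) W hlow harith
        exact absurd ⟨A, hAW, hAcard, hAind⟩ hKj


/-- Upper bound. -/
lemma upper_bound (n m : ℕ) (hn : 3 ≤ n) (hm : 2 ≤ m) (T : SimpleGraph (Fin n))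
    (hT : T.IsTree) : isRamsey T (kCliques 2 m) ((n-1)*(m-1)+2) := by
  intro R
  by_cases hemb : graphEmbeds T R
  · left; exact hemb
  · right
    have hnoemb : ¬ embIn T R (univ : Finset (Fin ((n-1)*(m-1)+2))) := by
      rintro ⟨f, h1, _, h3⟩
      exact hemb ⟨f, h1, h3⟩
    have hcard : (n-1) * (m-1) + 1 + (if m = m then 1 else 0) ≤
        (univ : Finset (Fin ((n-1)*(m-1)+2))).card := by
      rw [if_pos rfl, Finset.card_univ, Fintype.card_fin]
    obtain ⟨A, B, _, _, hdisj, hAind, hBind, hAcard, hBcard⟩ :=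
      main_Q hT hn R m m univ le_rfl (by omega) hnoemb hcard
    set eA := Finset.equivFinOfCardEq hAcard with heA
    set eB := Finset.equivFinOfCardEq hBcard with heB
    set g : Fin 2 × Fin m → Fin ((n-1)*(m-1)+2) :=
      fun x => if x.1 = 0 then (eA.symm x.2 : Fin ((n-1)*(m-1)+2))
        else (eB.symm x.2 : Fin ((n-1)*(m-1)+2)) with hg
    have htwo : ∀ t : Fin 2, t = 0 ∨ t = 1 := by decide
    have hgA : ∀ i : Fin m, g (0, i) = (eA.symm i : Fin ((n-1)*(m-1)+2)) := by
      intro i; simp [hg]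
    have hgB : ∀ i : Fin m, g (1, i) = (eB.symm i : Fin ((n-1)*(m-1)+2)) := by
      intro i
      rw [hg]
      norm_num
    have hgmemA : ∀ i : Fin m, g (0, i) ∈ A := by
      intro i; rw [hgA]; exact (eA.symm i).2
    have hgmemB : ∀ i : Fin m, g (1, i) ∈ B := by
      intro i; rw [hgB]; exact (eB.symm i).2
    refine ⟨g, ?_, ?_⟩
    · rintro ⟨t, i⟩ ⟨s, j⟩ h
      rcases htwo t with rfl | rfl <;> rcases htwo s with rfl | rfl
      · rw [hgA, hgA] at h
        have := eA.symm.injective (Subtype.coe_injective h)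
        rw [this]
      · exfalso
        rw [hgA, hgB] at h
        have hA' := (eA.symm i).2
        have hB' : ((eA.symm i : { x // x ∈ A }) : Fin ((n-1)*(m-1)+2)) ∈ B := by
          rw [h]; exact (eB.symm j).2
        exact (Finset.disjoint_left.mp hdisj hA') hB'
      · exfalso
        rw [hgB, hgA] at h
        have hB' := (eB.symm i).2
        have hA' : ((eB.symm i : { x // x ∈ B }) : Fin ((n-1)*(m-1)+2)) ∈ A := by
          rw [h]; exact (eA.symm j).2
        exact (Finset.disjoint_left.mp hdisj hA') hB'
      · rw [hgB, hgB] at h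
        have := eB.symm.injective (Subtype.coe_injective h)
        rw [this]
    · rintro ⟨t, i⟩ ⟨s, j⟩ ⟨h1, h2⟩
      simp only at h1 h2
      subst h1
      have hne : g (t, i) ≠ g (t, j) := by
        rcases htwo t with rfl | rfl
        · rw [hgA, hgA]
          intro h
          exact h2 (eA.symm.injective (Subtype.coe_injective h))
        · rw [hgB, hgB]
          intro h
          exact h2 (eB.symm.injective (Subtype.coe_injective h))
      rw [SimpleGraph.compl_adj]
      refine ⟨hne, ?_⟩
      rcases htwo t with rfl | rfl
      · exact hAind _ (hgmemA i) _ (hgmemA j)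
      · exact hBind _ (hgmemB i) _ (hgmemB j)

/-- The lower bound construction. -/
def lowerGraph (n m N' : ℕ) : SimpleGraph (Fin N') where
  Adj x y := x ≠ y ∧ (x : ℕ)/(n-1) = (y : ℕ)/(n-1) ∧
    (x : ℕ) < (n-1)*(m-1) ∧ (y : ℕ) < (n-1)*(m-1)
  symm := ⟨by rintro x y ⟨h1, h2, h3, h4⟩; exact ⟨h1.symm, h2.symm, h4, h3⟩⟩
  loopless := ⟨fun x h => h.1 rfl⟩

lemma lower_no_T {N' : ℕ} (n m : ℕ) (hn : 3 ≤ n) (T : SimpleGraph (Fin n)) (hT : T.IsTree) :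
    ¬ graphEmbeds T (lowerGraph n m N') := by
  rintro ⟨f, hinj, hpres⟩
  have hn1 : 0 < n - 1 := by omega
  -- each vertex of T has a neighbour, so each image is in the "grouped" part
  have hbdd : ∀ a : Fin n, (f a : ℕ) < (n-1)*(m-1) := by
    intro a
    obtain ⟨b, hb⟩ := exists_adj_of_connected hT.isConnected (by omega) a
    exact (hpres a b hb).2.2.1
  -- group is constant along walks
  have hgrp : ∀ (a b : Fin n), (f a : ℕ)/(n-1) = (f b : ℕ)/(n-1) := by
    intro a b
    obtain ⟨w⟩ := hT.isConnected.preconnected a b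
    induction w with
    | nil => rfl
    | cons h p ih => exact ((hpres _ _ h).2.1).trans ih
  have h0 : (0 : ℕ) < n := by omega
  set a₀ : Fin n := ⟨0, h0⟩ with ha₀
  set q₀ : ℕ := (f a₀ : ℕ)/(n-1) with hq₀
  set F : Finset (Fin N') := univ.filter (fun x => (x : ℕ)/(n-1) = q₀) with hF
  have hmapsto : ∀ a : Fin n, f a ∈ F := by
    intro a
    rw [hF, Finset.mem_filter]
    exact ⟨Finset.mem_univ _, (hgrp a a₀)⟩
  have hFcard : F.card ≤ n - 1 := by
    have hinjmod : Set.InjOn (fun x : Fin N' => ((x : ℕ) % (n-1))) F := by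
      intro x hx y hy h
      simp only at h
      rw [hF, Finset.coe_filter] at hx hy
      have hdx : (x : ℕ)/(n-1) = q₀ := hx.2
      have hdy : (y : ℕ)/(n-1) = q₀ := hy.2
      have : (x : ℕ) = (y : ℕ) := by
        have e1 := Nat.div_add_mod (x : ℕ) (n-1)
        have e2 := Nat.div_add_mod (y : ℕ) (n-1)
        rw [hdx] at e1
        rw [hdy] at e2
        omega
      exact Fin.ext this
    have himage : (F.image (fun x : Fin N' => ((x : ℕ) % (n-1)))) ⊆ Finset.range (n-1) := by
      intro z hz
      obtain ⟨x, _, hxz⟩ := Finset.mem_image.mp hz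
      rw [Finset.mem_range, ← hxz]
      exact Nat.mod_lt _ hn1
    calc F.card = (F.image (fun x : Fin N' => ((x : ℕ) % (n-1)))).card :=
          (Finset.card_image_of_injOn hinjmod).symm
      _ ≤ (Finset.range (n-1)).card := Finset.card_le_card himage
      _ = n - 1 := Finset.card_range _
  have hcardle : n ≤ F.card := by
    calc n = (univ : Finset (Fin n)).card := by simp
      _ = ((univ : Finset (Fin n)).image f).card :=
          (Finset.card_image_of_injOn (fun x _ y _ h => hinj h)).symm
      _ ≤ F.card := Finset.card_le_card (by
          intro z hz
          obtain ⟨a, _, haz⟩ := Finset.mem_image.mp hz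
          rw [← haz]
          exact hmapsto a)
  omega

lemma lower_no_2Km {N' : ℕ} (n m : ℕ) (hn : 3 ≤ n) (hm : 2 ≤ m)
    (hN' : N' ≤ (n-1)*(m-1)+1) :
    ¬ graphEmbeds (kCliques 2 m) (lowerGraph n m N')ᶜ := by
  rintro ⟨g, hinj, hpres⟩
  have hn1 : 0 < n - 1 := by omega
  have hbig : ∀ t : Fin 2, ∃ i : Fin m, (n-1)*(m-1) ≤ (g (t, i) : ℕ) := by
    intro t
    by_contra hcon
    push_neg at hcon
    -- all in grouped part : quotients are distinct, giving m ≤ m-1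
    have hinjq : Set.InjOn (fun i : Fin m => ((g (t, i) : ℕ))/(n-1))
        ((univ : Finset (Fin m)) : Set (Fin m)) := by
      intro i _ j _ h
      simp only at h
      by_contra hij
      have hadj : (kCliques 2 m).Adj (t, i) (t, j) := ⟨rfl, fun hh => hij hh⟩
      have := hpres _ _ hadj
      rw [SimpleGraph.compl_adj] at this
      exact this.2 ⟨this.1, h, hcon i, hcon j⟩
    have hsub : ((univ : Finset (Fin m)).image (fun i => ((g (t, i) : ℕ))/(n-1))) ⊆
        Finset.range (m-1) := by
      intro z hz
      obtain ⟨i, _, hiz⟩ := Finset.mem_image.mp hz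
      rw [Finset.mem_range, ← hiz]
      rw [Nat.div_lt_iff_lt_mul hn1]
      calc (g (t, i) : ℕ) < (n-1)*(m-1) := hcon i
        _ = (m-1)*(n-1) := mul_comm _ _
    have : m ≤ m - 1 := by
      calc m = (univ : Finset (Fin m)).card := by simp
        _ = ((univ : Finset (Fin m)).image (fun i => ((g (t, i) : ℕ))/(n-1))).card :=
            (Finset.card_image_of_injOn hinjq).symm
        _ ≤ (Finset.range (m-1)).card := Finset.card_le_card hsub
        _ = m - 1 := Finset.card_range _
    omega
  obtain ⟨i₀, hi₀⟩ := hbig 0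
  obtain ⟨i₁, hi₁⟩ := hbig 1
  have hx : (g (0, i₀) : ℕ) = (n-1)*(m-1) := by
    have := (g (0, i₀)).2
    omega
  have hy : (g (1, i₁) : ℕ) = (n-1)*(m-1) := by
    have := (g (1, i₁)).2
    omega
  have : g (0, i₀) = g (1, i₁) := Fin.ext (hx.trans hy.symm)
  have h01 : ((0 : Fin 2), i₀) = ((1 : Fin 2), i₁) := hinj this
  have : (0 : Fin 2) = 1 := congrArg Prod.fst h01
  exact absurd this (by decide)



end AuxRamseyProof

/-- Main theorem: every tree on `n ≥ 3` vertices satisfies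
`R(T_n, 2K_m) = (n-1)(m-1) + 2` for `m ≥ 2`. -/
theorem stmt_4 (n m : ℕ) (hn : 3 ≤ n) (hm : 2 ≤ m)
    (T : SimpleGraph (Fin n)) (hT : T.IsTree) :
    ramsey T (kCliques 2 m) = (n - 1) * (m - 1) + 2 := by
  have hup : isRamsey T (kCliques 2 m) ((n-1)*(m-1)+2) := upper_bound n m hn hm T hT
  have hlow : ∀ N ∈ {N | isRamsey T (kCliques 2 m) N}, (n-1)*(m-1)+2 ≤ N := by
    intro N hN
    by_contra hcon
    push_neg at hcon
    have hN' : N ≤ (n-1)*(m-1)+1 := by omega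
    rcases hN (lowerGraph n m N) with h | h
    · exact lower_no_T n m hn T hT h
    · exact lower_no_2Km n m hn hm hN' h
  exact le_antisymm (Nat.sInf_le hup) (le_csInf ⟨_, hup⟩ hlow)
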